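/- arXiv:2105.10821 — 6 statements merged into one kernel-verified Lean document; each statement's English description precedes it below -/
import Mathlib

section
/- Fix an integer ℓ ≥ 2, a real number q with (ℓ−1)/ℓ < q < 1, and α_φ ∈ (0,1). Then there exist probability densities f and g on [0,∞) with respect to Lebesgue measure, with g strictly positive on [0,∞), such that, writing r := f/g, Q for the probability measure with density g and P for the probability measure with density f, the following hold: (i) E_Q[r(X)^ℓ] < ∞; (ii) the tests φ_k(x₁,…,x_k) := 1{max(x₁,…,x_k) ≤ k} satisfy P(φ_k(Z₁,…,Z_k) = 1) = α_φ for every k ≥ 1, where Z₁,…,Z_k are i.i.d. with distribution P; and (iii) for X₁,…,X_n i.i.d. with distribution Q and m(n) := ⌈n^q⌉, every resampling scheme Ψ whose output is an m(n)-tuple each of whose entries equals one of the observed values X₁,…,X_n satisfies lim_{n→∞} P(φ_{m(n)}(Ψ(X₁,…,X_n)) = 1) = 1. -/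
open MeasureTheory Filter Topology
open scoped ENNReal

noncomputable def stepFn (s : ℕ → ℝ) (x : ℝ) : ℝ := if x < 0 then 0 else s ⌊x⌋₊

lemma measurable_stepFn (s : ℕ → ℝ) : Measurable (stepFn s) := by
  unfold stepFn
  exact Measurable.ite measurableSet_Iio measurable_const
    (measurable_from_top.comp Nat.measurable_floor)

lemma stepFn_lintegral_Ico (s : ℕ → ℝ) (j : ℕ) :
    ∫⁻ x in Set.Ico (j:ℝ) (j+1), ENNReal.ofReal (stepFn s x) = ENNReal.ofReal (s j) := by
  have h : ∫⁻ x in Set.Ico (j:ℝ) (j+1), ENNReal.ofReal (stepFn s x)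
      = ∫⁻ _ in Set.Ico (j:ℝ) (j+1), ENNReal.ofReal (s j) := by
    refine setLIntegral_congr_fun_ae measurableSet_Ico
      (Filter.Eventually.of_forall (fun x hx => ?_))
    have h1 : ⌊x⌋₊ = j := Nat.floor_eq_on_Ico j x hx
    have h2 : ¬ (x < 0) := not_lt.2 (le_trans (Nat.cast_nonneg j) hx.1)
    simp [stepFn, h1, h2]
  rw [h, setLIntegral_const, Real.volume_Ico]
  simp

lemma stepFn_lintegral_neg (s : ℕ → ℝ) :
    ∫⁻ x in Set.Iio (0:ℝ), ENNReal.ofReal (stepFn s x) = 0 := by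
  have h : ∫⁻ x in Set.Iio (0:ℝ), ENNReal.ofReal (stepFn s x)
      = ∫⁻ _ in Set.Iio (0:ℝ), (0:ℝ≥0∞) := by
    refine setLIntegral_congr_fun_ae measurableSet_Iio
      (Filter.Eventually.of_forall (fun x hx => ?_))
    simp only [Set.mem_Iio] at hx
    simp [stepFn, hx]
  rw [h]; simp

lemma stepFn_lintegral_Iic (s : ℕ → ℝ) (k : ℕ) :
    ∫⁻ x in Set.Iic (k:ℝ), ENNReal.ofReal (stepFn s x)
      = ∑ j ∈ Finset.range k, ENNReal.ofReal (s j) := by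
  induction k with
  | zero =>
    simp only [Nat.cast_zero, Finset.range_zero, Finset.sum_empty]
    rw [← Measure.restrict_congr_set Iio_ae_eq_Iic]
    exact stepFn_lintegral_neg s
  | succ k ih =>
    have hsplit : Set.Iic ((k:ℝ)+1) = Set.Iic (k:ℝ) ∪ Set.Ioc ((k:ℝ)) (k+1) :=
      (Set.Iic_union_Ioc_eq_Iic (by linarith)).symm
    have hIoc : ∫⁻ x in Set.Ioc ((k:ℝ)) (k+1), ENNReal.ofReal (stepFn s x)
        = ENNReal.ofReal (s k) := by
      have hae : ∀ᵐ x : ℝ, x ≠ (k:ℝ)+1 := by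
        rw [ae_iff]
        simpa using measure_singleton ((k:ℝ)+1)
      have h : ∫⁻ x in Set.Ioc ((k:ℝ)) (k+1), ENNReal.ofReal (stepFn s x)
          = ∫⁻ _ in Set.Ioc ((k:ℝ)) (k+1), ENNReal.ofReal (s k) := by
        refine setLIntegral_congr_fun_ae measurableSet_Ioc ?_
        filter_upwards [hae] with x hne hx
        have h1 : ⌊x⌋₊ = k := by
          refine Nat.floor_eq_iff (by linarith [hx.1, Nat.cast_nonneg (α := ℝ) k]) |>.2
            ⟨hx.1.le, lt_of_le_of_ne hx.2 hne⟩
        have h2 : ¬ (x < 0) := not_lt.2 (le_trans (Nat.cast_nonneg k) hx.1.le)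
        simp [stepFn, h1, h2]
      rw [h, setLIntegral_const, Real.volume_Ioc]
      simp
    push_cast
    rw [hsplit, lintegral_union measurableSet_Ioc
      (Set.Iic_disjoint_Ioc (le_refl (k:ℝ))), ih, hIoc, Finset.sum_range_succ]

lemma Ici_eq_iUnion_Ico : Set.Ici (0:ℝ) = ⋃ j : ℕ, Set.Ico (j:ℝ) (j+1) := by
  ext x
  simp only [Set.mem_Ici, Set.mem_iUnion, Set.mem_Ico]
  constructor
  · intro hx
    exact ⟨⌊x⌋₊, Nat.floor_le hx, Nat.lt_floor_add_one x⟩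
  · rintro ⟨j, h1, _⟩
    exact le_trans (Nat.cast_nonneg j) h1

lemma stepFn_lintegral (s : ℕ → ℝ) :
    ∫⁻ x, ENNReal.ofReal (stepFn s x) = ∑' j, ENNReal.ofReal (s j) := by
  have hsplit := lintegral_add_compl (μ := volume)
    (fun x => ENNReal.ofReal (stepFn s x)) (measurableSet_Ici (a := (0:ℝ)))
  rw [Set.compl_Ici] at hsplit
  rw [← hsplit, stepFn_lintegral_neg, add_zero, Ici_eq_iUnion_Ico,
    lintegral_iUnion (fun j => measurableSet_Ico) ?_]
  · exact tsum_congr (fun j => stepFn_lintegral_Ico s j)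
  · intro i j hij
    simp only [Function.onFun]
    rw [Set.Ico_disjoint_Ico]
    rcases lt_or_gt_of_ne hij with h | h
    · have : (i:ℝ) + 1 ≤ (j:ℝ) := by exact_mod_cast h
      exact le_trans (min_le_left _ _) (le_trans this (le_max_right _ _))
    · have : (j:ℝ) + 1 ≤ (i:ℝ) := by exact_mod_cast h
      exact le_trans (min_le_right _ _) (le_trans this (le_max_left _ _))


lemma aux_a_bound (α : ℝ) (hα0 : 0 < α) (hα1 : α < 1) (j : ℕ) (hj : 1 ≤ j) :
    α ^ (((j:ℝ)+1)⁻¹) - α ^ ((j:ℝ)⁻¹) ≤ 2*(-Real.log α) * ((j:ℝ)+1) ^ (-2:ℝ) := by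
  have hJ1 : (1:ℝ) ≤ (j:ℝ) := by exact_mod_cast hj
  have hJ0 : (0:ℝ) < (j:ℝ) := by linarith
  set J : ℝ := (j:ℝ)
  set c : ℝ := -Real.log α with hcdef
  have hc0 : 0 < c := by
    rw [hcdef]; simpa using Real.log_neg hα0 hα1
  set u : ℝ := J⁻¹ - (J+1)⁻¹ with hudef
  have hu0 : 0 ≤ u := by
    rw [hudef, sub_nonneg]
    exact inv_anti₀ hJ0 (by linarith)
  have hueq : u = 1/(J*(J+1)) := by
    rw [hudef]; field_simp; ring
  have hsin : α ^ (J⁻¹) = α ^ ((J+1)⁻¹) * α ^ u := by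
    rw [← Real.rpow_add hα0]
    congr 1
    rw [hudef]; ring
  have h1 : α ^ ((J+1)⁻¹) ≤ 1 := Real.rpow_le_one hα0.le hα1.le (by positivity)
  have h2 : 1 - α ^ u ≤ c * u := by
    have h := Real.add_one_le_exp (Real.log α * u)
    have hrw : α ^ u = Real.exp (Real.log α * u) := Real.rpow_def_of_pos hα0 u
    rw [hrw, hcdef]
    nlinarith
  have h3 : 0 ≤ 1 - α ^ u := by
    have : α ^ u ≤ 1 := Real.rpow_le_one hα0.le hα1.le hu0
    linarith
  have h4 : c * u ≤ 2*c * ((J+1) ^ (-2:ℝ)) := by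
    have hx2 : (J+1) ^ (-2:ℝ) = ((J+1)^(2:ℕ))⁻¹ := by
      rw [show (-2:ℝ) = -((2:ℕ):ℝ) by norm_num, Real.rpow_neg (by positivity),
        Real.rpow_natCast]
    rw [hx2]
    have hle : 1/(J*(J+1)) ≤ 2/((J+1)^(2:ℕ)) := by
      rw [div_le_div_iff₀ (by positivity) (by positivity)]
      nlinarith
    have h5 := mul_le_mul_of_nonneg_left hle hc0.le
    calc c * u = c * (1/(J*(J+1))) := by rw [hueq]
      _ ≤ c * (2/((J+1)^(2:ℕ))) := h5
      _ = 2*c*((J+1)^(2:ℕ))⁻¹ := by ring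
  calc α ^ ((J+1)⁻¹) - α ^ (J⁻¹) = α ^ ((J+1)⁻¹) * (1 - α ^ u) := by rw [hsin]; ring
    _ ≤ 1 * (1 - α ^ u) := mul_le_mul_of_nonneg_right h1 h3
    _ = 1 - α ^ u := one_mul _
    _ ≤ c * u := h2
    _ ≤ 2*c * ((J+1) ^ (-2:ℝ)) := h4


lemma aux_b_bound (β : ℝ) (hβ : 1 ≤ β) (x : ℝ) (hx1 : 1 ≤ x) :
    β * 2 ^ (-β) * x ^ (-β-1) ≤ x ^ (-β) - (x+1) ^ (-β) := by
  have hx0 : 0 < x := by linarith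
  have hβ0 : 0 < β := by linarith
  have hxb : 0 < x ^ β := Real.rpow_pos_of_pos hx0 β
  have hxb1 : 0 < (x+1) ^ β := Real.rpow_pos_of_pos (by linarith) β
  have hneg1 : x ^ (-β) = (x ^ β)⁻¹ := Real.rpow_neg hx0.le β
  have hneg2 : (x+1) ^ (-β) = ((x+1) ^ β)⁻¹ := Real.rpow_neg (by linarith) β
  have hBer : 1 + β / x ≤ (x+1) ^ β / x ^ β := by
    have hm1 : (-1:ℝ) ≤ 1/x := by
      have : (0:ℝ) ≤ 1/x := by positivity
      linarith
    have h := one_add_mul_self_le_rpow_one_add (s := 1/x) hm1 hβ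
    have hrw : ((1:ℝ) + 1/x) ^ β = (x+1) ^ β / x ^ β := by
      rw [show (1:ℝ)+1/x = (x+1)/x by field_simp, Real.div_rpow (by linarith) hx0.le]
    rw [hrw, mul_one_div] at h
    exact h
  have hkey : β / x * ((x+1) ^ β)⁻¹ ≤ x ^ (-β) - (x+1) ^ (-β) := by
    rw [hneg1, hneg2]
    have expand : (x ^ β)⁻¹ - ((x+1) ^ β)⁻¹ = ((x+1)^β/x^β - 1) * ((x+1)^β)⁻¹ := by
      field_simp
    rw [expand]
    refine mul_le_mul_of_nonneg_right (by linarith) (by positivity)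
  refine le_trans ?_ hkey
  -- β * 2^{-β} * x^{-β-1} ≤ β/x * ((x+1)^β)⁻¹
  have hsplit2 : x ^ (-β-1) = (x^β)⁻¹ * x⁻¹ := by
    rw [show -β-1 = -β + (-1) by ring, Real.rpow_add hx0, hneg1, Real.rpow_neg_one]
  rw [hsplit2]
  have h2b : (x+1)^β ≤ 2^β * x^β := by
    calc (x+1)^β ≤ (2*x)^β := Real.rpow_le_rpow (by linarith) (by linarith) (by linarith)
      _ = 2^β * x^β := Real.mul_rpow (by norm_num) hx0.le
  have h2bpos : (0:ℝ) < 2^β * x^β := by positivity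
  have hinv : (2^β * x^β)⁻¹ ≤ ((x+1)^β)⁻¹ := by
    exact inv_anti₀ hxb1 h2b
  have h2neg : (2:ℝ)^(-β) = ((2:ℝ)^β)⁻¹ := Real.rpow_neg (by norm_num) β
  calc β * 2^(-β) * ((x^β)⁻¹ * x⁻¹) = β / x * ((2^β)⁻¹ * (x^β)⁻¹) := by
        rw [h2neg]; ring
    _ = β / x * (2^β * x^β)⁻¹ := by rw [mul_inv]
    _ ≤ β / x * ((x+1)^β)⁻¹ := mul_le_mul_of_nonneg_left hinv (by positivity)


lemma aux_w_bound (ℓ : ℕ) (hℓ : 2 ≤ ℓ) (a b Ca Cb x ea eb : ℝ)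
    (hx : 1 ≤ x) (ha0 : 0 ≤ a) (hb0 : 0 < b) (hCb : 0 < Cb)
    (ha : a ≤ Ca * x ^ ea) (hb : Cb * x ^ eb ≤ b) :
    b * (a/b)^ℓ ≤ (Ca^ℓ / Cb^(ℓ-1)) * x ^ (ea*ℓ - eb*((ℓ-1 : ℕ):ℝ)) := by
  have hx0 : (0:ℝ) < x := by linarith
  have hCa0 : 0 ≤ Ca := by
    have h1 : (0:ℝ) < x ^ ea := Real.rpow_pos_of_pos hx0 ea
    nlinarith [le_trans ha0 ha]
  have hbb : b^(ℓ-1) * b = b^ℓ := by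
    rw [← pow_succ]
    congr 1
    omega
  have step1 : b * (a/b)^ℓ = a^ℓ / b^(ℓ-1) := by
    rw [div_pow, eq_div_iff (pow_ne_zero _ hb0.ne')]
    calc b * (a^ℓ/b^ℓ) * b^(ℓ-1) = (a^ℓ / b^ℓ) * (b^(ℓ-1)*b) := by ring
      _ = a^ℓ/b^ℓ * b^ℓ := by rw [hbb]
      _ = a^ℓ := div_mul_cancel₀ _ (pow_ne_zero _ hb0.ne')
  have hrp1 : (x ^ ea)^ℓ = x ^ (ea*(ℓ:ℝ)) := by
    rw [Real.rpow_mul hx0.le, Real.rpow_natCast]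
  have hrp2 : (x ^ eb)^(ℓ-1) = x ^ (eb*((ℓ-1:ℕ):ℝ)) := by
    rw [Real.rpow_mul hx0.le, Real.rpow_natCast]
  have step2 : a^ℓ ≤ Ca^ℓ * x ^ (ea*(ℓ:ℝ)) := by
    calc a^ℓ ≤ (Ca * x ^ ea)^ℓ := pow_le_pow_left₀ ha0 ha ℓ
      _ = Ca^ℓ * (x ^ ea)^ℓ := mul_pow _ _ _
      _ = Ca^ℓ * x ^ (ea*(ℓ:ℝ)) := by rw [hrp1]
  have hden_pos : (0:ℝ) < Cb^(ℓ-1) * x ^ (eb*((ℓ-1:ℕ):ℝ)) := by positivity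
  have step3 : Cb^(ℓ-1) * x ^ (eb*((ℓ-1:ℕ):ℝ)) ≤ b^(ℓ-1) := by
    calc Cb^(ℓ-1) * x ^ (eb*((ℓ-1:ℕ):ℝ)) = (Cb * x ^ eb)^(ℓ-1) := by
          rw [mul_pow, hrp2]
      _ ≤ b^(ℓ-1) := pow_le_pow_left₀ (by positivity) hb (ℓ-1)
  have step4 : a^ℓ / b^(ℓ-1) ≤ (Ca^ℓ * x ^ (ea*(ℓ:ℝ))) / (Cb^(ℓ-1) * x ^ (eb*((ℓ-1:ℕ):ℝ))) :=
    div_le_div₀ (by positivity) step2 hden_pos step3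
  rw [step1]
  refine le_trans step4 (le_of_eq ?_)
  rw [mul_div_mul_comm, ← Real.rpow_sub hx0]

set_option maxHeartbeats 2000000 in
/-- **Necessity of the rate `m = o(n^{(ℓ−1)/ℓ})`.** Fix an integer `ℓ ≥ 2`, a real `qe`
with `(ℓ−1)/ℓ < qe < 1` and `α ∈ (0,1)`. There exist probability densities `f` (target)
and `g` (observed) on `[0,∞)` with respect to Lebesgue measure, with `g` strictly positive
on `[0,∞)`, such that, writing `Q` and `P` for the measures with densities `g` and `f`
respectively and `r := f/g`:
(i) `E_Q[r(X)^ℓ] < ∞`;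
(ii) the tests `φ_k(x₁,…,x_k) := 1{max(x₁,…,x_k) ≤ k}` satisfy `P^⊗k(φ_k = 1) = α` for
every `k ≥ 1`; and
(iii) for data `X₁,…,X_n` i.i.d. `Q` and `m(n) := ⌈n^qe⌉`, every (possibly randomized,
measurable) resampling scheme `Ψ`, whose output is an `m(n)`-tuple each entry of which
equals one of the observed values, satisfies `P(φ_{m(n)}(Ψ(X₁,…,X_n)) = 1) → 1`. -/
theorem necessity_of_sqrt_n_rate
    (ℓ : ℕ) (hℓ : 2 ≤ ℓ) (qe : ℝ)
    (hq1 : ((ℓ : ℝ) - 1) / ℓ < qe) (hq2 : qe < 1)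
    (α : ℝ) (hα : α ∈ Set.Ioo (0 : ℝ) 1) :
    ∃ f g : ℝ → ℝ, Measurable f ∧ Measurable g ∧
      (∀ x, 0 ≤ f x) ∧ (∀ x, x < 0 → f x = 0) ∧ (∀ x, x < 0 → g x = 0) ∧
      (∀ x, 0 ≤ x → 0 < g x) ∧
      IsProbabilityMeasure (volume.withDensity fun x => ENNReal.ofReal (f x)) ∧
      IsProbabilityMeasure (volume.withDensity fun x => ENNReal.ofReal (g x)) ∧
      Integrable (fun x => (f x / g x) ^ ℓ)
        (volume.withDensity fun x => ENNReal.ofReal (g x)) ∧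
      (∀ k : ℕ, 1 ≤ k →
        (((Measure.pi fun _ : Fin k =>
            volume.withDensity fun x => ENNReal.ofReal (f x))
          {z : Fin k → ℝ | ∀ j, z j ≤ (k : ℝ)}).toReal = α)) ∧
      (∀ (Ω' : Type) (_ : MeasurableSpace Ω') (ℙ' : Measure Ω'),
        IsProbabilityMeasure ℙ' →
        ∀ Ψ : (n : ℕ) → (Fin n → ℝ) → Ω' → (Fin ⌈(n : ℝ) ^ qe⌉₊ → ℝ),
        (∀ n, Measurable fun pu : (Fin n → ℝ) × Ω' => Ψ n pu.1 pu.2) →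
        (∀ n x ω' j, ∃ i, Ψ n x ω' j = x i) →
        Tendsto (fun n =>
            (((Measure.pi fun _ : Fin n =>
                  volume.withDensity fun x => ENNReal.ofReal (g x)).prod ℙ')
              {pu : (Fin n → ℝ) × Ω' |
                ∀ j, Ψ n pu.1 pu.2 j ≤ (⌈(n : ℝ) ^ qe⌉₊ : ℝ)}).toReal)
          atTop (𝓝 1)) := by
  obtain ⟨hα0, hα1⟩ := hα
  have hℓR : (2:ℝ) ≤ (ℓ:ℝ) := by exact_mod_cast hℓ
  have hℓ1 : (1:ℝ) ≤ (ℓ:ℝ) - 1 := by linarith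
  have hq0 : 0 < qe := lt_trans (by positivity) hq1
  -- choice of β
  set β : ℝ := (1/qe + (ℓ:ℝ)/((ℓ:ℝ)-1))/2 with hβdef
  have hfrac : 1/((( ℓ:ℝ) - 1)/ℓ) = (ℓ:ℝ)/((ℓ:ℝ)-1) := one_div_div _ _
  have h1q : 1/qe < (ℓ:ℝ)/((ℓ:ℝ)-1) := by
    rw [← hfrac]
    exact one_div_lt_one_div_of_lt (by positivity) hq1
  have hβ1 : 1/qe < β := by rw [hβdef]; linarith
  have hβ2 : β < (ℓ:ℝ)/((ℓ:ℝ)-1) := by rw [hβdef]; linarith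
  have hqe1 : 1 < 1/qe := by
    rw [lt_div_iff₀ hq0]; linarith
  have hβgt1 : 1 < β := lt_trans hqe1 hβ1
  have hβ0 : 0 < β := lt_trans one_pos hβgt1
  have hqβ : 1 < qe * β := by
    have := (div_lt_iff₀ hq0).mp hβ1
    linarith [mul_comm qe β]
  have hβℓ : β * ((ℓ:ℝ)-1) < ℓ := by
    have := (lt_div_iff₀ (by linarith : (0:ℝ) < (ℓ:ℝ)-1)).mp hβ2
    linarith
  -- the sequences
  set A : ℕ → ℝ := fun k => if k = 0 then 0 else α ^ ((k:ℝ)⁻¹) with hAdef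
  set T : ℕ → ℝ := fun j => ((j:ℝ)+1) ^ (-β) with hTdef
  set a' : ℕ → ℝ := fun j => A (j+1) - A j with ha'def
  set b' : ℕ → ℝ := fun j => T j - T (j+1) with hb'def
  -- basic facts about A
  have hA0 : A 0 = 0 := by simp [hAdef]
  have hAle1 : ∀ k, A k ≤ 1 := by
    intro k
    rcases Nat.eq_zero_or_pos k with h | h
    · simp [hAdef, h]
    · simp only [hAdef, Nat.pos_iff_ne_zero.mp h, if_false]
      exact Real.rpow_le_one hα0.le hα1.le (by positivity)
  have hAnonneg : ∀ k, 0 ≤ A k := by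
    intro k
    rcases Nat.eq_zero_or_pos k with h | h
    · simp [hAdef, h]
    · simp only [hAdef, Nat.pos_iff_ne_zero.mp h, if_false]
      positivity
  have hAmono : Monotone A := by
    intro j k hjk
    rcases Nat.eq_zero_or_pos j with h | h
    · rw [h, hA0]; exact hAnonneg k
    · have hk : 0 < k := lt_of_lt_of_le h hjk
      simp only [hAdef, Nat.pos_iff_ne_zero.mp h, Nat.pos_iff_ne_zero.mp hk, if_false]
      refine Real.rpow_le_rpow_of_exponent_ge hα0 hα1.le ?_
      exact one_div_le_one_div_of_le (by exact_mod_cast h) (by exact_mod_cast hjk : (j:ℝ) ≤ k)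
        |>.trans_eq (one_div _) |>.trans_eq' (one_div _)
  have ha'nonneg : ∀ j, 0 ≤ a' j := fun j => sub_nonneg.2 (hAmono (Nat.le_succ j))
  have hAsum : ∀ k, ∑ j ∈ Finset.range k, a' j = A k := by
    intro k
    rw [ha'def]
    rw [Finset.sum_range_sub (f := A) k, hA0, sub_zero]
  have hAtendsto : Tendsto A atTop (𝓝 1) := by
    have h0 : Tendsto (fun k : ℕ => (k:ℝ)⁻¹) atTop (𝓝 0) :=
      tendsto_inv_atTop_zero.comp tendsto_natCast_atTop_atTop
    have hmul : Tendsto (fun k : ℕ => Real.log α * (k:ℝ)⁻¹) atTop (𝓝 (Real.log α * 0)) :=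
      h0.const_mul (Real.log α)
    have h1 : Tendsto (fun k : ℕ => Real.exp (Real.log α * (k:ℝ)⁻¹)) atTop
        (𝓝 (Real.exp (Real.log α * 0))) := (Real.continuous_exp.tendsto _).comp hmul
    rw [mul_zero, Real.exp_zero] at h1
    refine h1.congr' ?_
    filter_upwards [eventually_ge_atTop 1] with k hk
    have hk0 : k ≠ 0 := Nat.pos_iff_ne_zero.mp hk
    show Real.exp (Real.log α * (k:ℝ)⁻¹) = A k
    rw [hAdef]
    simp only [hk0, if_false]
    rw [Real.rpow_def_of_pos hα0]
  -- facts about T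
  have hT0 : T 0 = 1 := by simp [hTdef]
  have hTpos : ∀ j, 0 < T j := by
    intro j
    rw [hTdef]
    positivity
  have hTanti : ∀ j, T (j+1) < T j := by
    intro j
    rw [hTdef]
    refine Real.rpow_lt_rpow_of_neg (by positivity) (by push_cast; linarith) (by linarith)
  have hb'pos : ∀ j, 0 < b' j := fun j => sub_pos.2 (hTanti j)
  have hTsum : ∀ k, ∑ j ∈ Finset.range k, b' j = 1 - T k := by
    intro k
    rw [hb'def, Finset.sum_range_sub' (f := T) k, hT0]
  have hTle1 : ∀ k, T k ≤ 1 := by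
    intro k
    rw [hTdef]
    refine Real.rpow_le_one_of_one_le_of_nonpos (by push_cast; linarith [Nat.cast_nonneg (α := ℝ) k]) (by linarith)
  have hTtendsto : Tendsto T atTop (𝓝 0) := by
    have h0 : Tendsto (fun j : ℕ => (j:ℝ)+1) atTop atTop :=
      tendsto_atTop_add_const_right atTop 1 tendsto_natCast_atTop_atTop
    exact (tendsto_rpow_neg_atTop hβ0).comp h0
  -- summability
  have ha'sum : HasSum a' 1 := by
    rw [hasSum_iff_tendsto_nat_of_nonneg ha'nonneg]
    refine hAtendsto.congr (fun k => (hAsum k).symm)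
  have hb'sum : HasSum b' 1 := by
    rw [hasSum_iff_tendsto_nat_of_nonneg (fun j => (hb'pos j).le)]
    have : Tendsto (fun k : ℕ => 1 - T k) atTop (𝓝 (1 - 0)) :=
      (tendsto_const_nhds (x := (1:ℝ))).sub hTtendsto
    rw [sub_zero] at this
    exact this.congr (fun k => (hTsum k).symm)
  -- measures
  set μf := volume.withDensity fun x => ENNReal.ofReal (stepFn a' x) with hμfdef
  set μg := volume.withDensity fun x => ENNReal.ofReal (stepFn b' x) with hμgdef
  have hμf_univ : μf Set.univ = 1 := by
    rw [hμfdef, withDensity_apply _ MeasurableSet.univ, Measure.restrict_univ,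
      stepFn_lintegral, ← ENNReal.ofReal_tsum_of_nonneg ha'nonneg ha'sum.summable,
      ha'sum.tsum_eq]
    exact ENNReal.ofReal_one
  have hμg_univ : μg Set.univ = 1 := by
    rw [hμgdef, withDensity_apply _ MeasurableSet.univ, Measure.restrict_univ,
      stepFn_lintegral, ← ENNReal.ofReal_tsum_of_nonneg (fun j => (hb'pos j).le)
        hb'sum.summable, hb'sum.tsum_eq]
    exact ENNReal.ofReal_one
  have hμfprob : IsProbabilityMeasure μf := ⟨hμf_univ⟩
  have hμgprob : IsProbabilityMeasure μg := ⟨hμg_univ⟩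
  have hμf_Iic : ∀ k : ℕ, μf (Set.Iic (k:ℝ)) = ENNReal.ofReal (A k) := by
    intro k
    rw [hμfdef, withDensity_apply _ measurableSet_Iic, stepFn_lintegral_Iic,
      ← ENNReal.ofReal_sum_of_nonneg (fun j _ => ha'nonneg j), hAsum]
  have hμg_Iic : ∀ k : ℕ, μg (Set.Iic (k:ℝ)) = ENNReal.ofReal (1 - T k) := by
    intro k
    rw [hμgdef, withDensity_apply _ measurableSet_Iic, stepFn_lintegral_Iic,
      ← ENNReal.ofReal_sum_of_nonneg (fun j _ => (hb'pos j).le), hTsum]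
  -- pointwise facts
  have hfnonneg : ∀ x, 0 ≤ stepFn a' x := by
    intro x
    unfold stepFn
    split
    · exact le_refl 0
    · exact ha'nonneg _
  have hfneg : ∀ x, x < 0 → stepFn a' x = 0 := by
    intro x hx; simp [stepFn, hx]
  have hgneg : ∀ x, x < 0 → stepFn b' x = 0 := by
    intro x hx; simp [stepFn, hx]
  have hgpos : ∀ x, 0 ≤ x → 0 < stepFn b' x := by
    intro x hx
    simp only [stepFn, not_lt.2 hx, if_false]
    exact hb'pos _
  refine ⟨stepFn a', stepFn b', measurable_stepFn a', measurable_stepFn b',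
    hfnonneg, hfneg, hgneg, hgpos, hμfprob, hμgprob, ?_, ?_, ?_⟩
  · -- (i) integrability
    have hgnonneg : ∀ x, 0 ≤ stepFn b' x := by
      intro x
      unfold stepFn
      split
      · exact le_refl 0
      · exact (hb'pos _).le
    have hc0 : (0:ℝ) < -Real.log α := by simpa using Real.log_neg hα0 hα1
    have hD0 : (0:ℝ) < β * 2 ^ (-β) := by positivity
    set w : ℕ → ℝ := fun j => b' j * (a' j / b' j)^ℓ with hwdef
    have hwnonneg : ∀ j, 0 ≤ w j := fun j =>
      mul_nonneg (hb'pos j).le (pow_nonneg (div_nonneg (ha'nonneg j) (hb'pos j).le) ℓ)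
    set Cc : ℝ := (2*(-Real.log α))^ℓ / (β * 2^(-β))^(ℓ-1) with hCcdef
    set ee : ℝ := (-2:ℝ)*(ℓ:ℝ) - (-β-1)*((ℓ-1:ℕ):ℝ) with heedef
    have hℓcast : ((ℓ-1:ℕ):ℝ) = (ℓ:ℝ)-1 := by
      have h1 : (1:ℕ) ≤ ℓ := by omega
      push_cast [h1]
      ring
    have hee : ee < -1 := by
      rw [heedef, hℓcast]
      nlinarith
    have hCc0 : (0:ℝ) ≤ Cc := by
      rw [hCcdef]
      positivity
    have hwbound : ∀ j : ℕ, 1 ≤ j → w j ≤ Cc * ((j:ℝ)+1) ^ ee := by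
      intro j hj
      have hj0 : j ≠ 0 := by omega
      have hx1 : (1:ℝ) ≤ (j:ℝ)+1 := by linarith [Nat.cast_nonneg (α := ℝ) j]
      have haj : a' j ≤ 2*(-Real.log α) * ((j:ℝ)+1) ^ (-2:ℝ) := by
        have h := aux_a_bound α hα0 hα1 j hj
        have heq : a' j = α ^ (((j:ℝ)+1)⁻¹) - α ^ ((j:ℝ)⁻¹) := by
          simp only [ha'def, hAdef, hj0, Nat.succ_ne_zero, if_false]
          push_cast
          ring_nf
        rw [heq]
        exact h
      have hbj : (β * 2^(-β)) * ((j:ℝ)+1) ^ (-β-1) ≤ b' j := by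
        have h := aux_b_bound β hβgt1.le ((j:ℝ)+1) hx1
        have heq : b' j = ((j:ℝ)+1) ^ (-β) - (((j:ℝ)+1)+1) ^ (-β) := by
          simp only [hb'def, hTdef]
          push_cast
          ring_nf
        rw [heq]
        exact h
      have h := aux_w_bound ℓ hℓ (a' j) (b' j) (2*(-Real.log α)) (β * 2^(-β))
        ((j:ℝ)+1) (-2:ℝ) (-β-1) hx1 (ha'nonneg j) (hb'pos j) hD0 haj hbj
      rw [hwdef, hCcdef, heedef]
      exact h
    have hmeas_h : Measurable fun x : ℝ => (stepFn a' x / stepFn b' x)^ℓ :=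
      ((measurable_stepFn a').div (measurable_stepFn b')).pow_const ℓ
    constructor
    · exact hmeas_h.aestronglyMeasurable
    · rw [hasFiniteIntegral_iff_ofReal (Filter.Eventually.of_forall (fun x =>
        pow_nonneg (div_nonneg (hfnonneg x) (hgnonneg x)) ℓ))]
      rw [lintegral_withDensity_eq_lintegral_mul volume
        (measurable_stepFn b').ennreal_ofReal hmeas_h.ennreal_ofReal]
      have hpt : ∀ x : ℝ, ((fun x => ENNReal.ofReal (stepFn b' x)) *
          fun x => ENNReal.ofReal ((stepFn a' x / stepFn b' x)^ℓ)) x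
          = ENNReal.ofReal (stepFn w x) := by
        intro x
        simp only [Pi.mul_apply]
        unfold stepFn
        split_ifs with h
        · simp
        · rw [← ENNReal.ofReal_mul (hb'pos _).le]
      rw [lintegral_congr hpt, stepFn_lintegral]
      have hee1 : (1:ℝ) ^ ee = 1 := Real.one_rpow ee
      have hwbound' : ∀ j : ℕ, w j ≤ (Cc + w 0) * ((j:ℝ)+1) ^ ee := by
        intro j
        rcases Nat.eq_zero_or_pos j with hj | hj
        · rw [hj]
          norm_num [hee1]
          linarith [hCc0]
        · have h := hwbound j hj
          have hr0 : (0:ℝ) ≤ ((j:ℝ)+1) ^ ee := Real.rpow_nonneg (by positivity) ee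
          nlinarith [hwnonneg 0]
      have hsum1 : Summable (fun n : ℕ => (Cc + w 0) * ((n:ℝ)+1) ^ ee) := by
        have hsum0 : Summable (fun n : ℕ => (n:ℝ) ^ ee) := Real.summable_nat_rpow.mpr hee
        have h1 := (summable_nat_add_iff 1).mpr hsum0
        have h2 : ∀ n : ℕ, (((n+1:ℕ)):ℝ) ^ ee = ((n:ℝ)+1) ^ ee := by
          intro n
          push_cast
          ring_nf
        exact (h1.congr h2).mul_left _
      calc ∑' j : ℕ, ENNReal.ofReal (w j)
          ≤ ∑' j : ℕ, ENNReal.ofReal ((Cc + w 0) * ((j:ℝ)+1) ^ ee) :=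
            ENNReal.tsum_le_tsum (fun j => ENNReal.ofReal_le_ofReal (hwbound' j))
        _ = ENNReal.ofReal (∑' j : ℕ, (Cc + w 0) * ((j:ℝ)+1) ^ ee) :=
            (ENNReal.ofReal_tsum_of_nonneg (fun j =>
              mul_nonneg (by linarith [hCc0, hwnonneg 0])
                (Real.rpow_nonneg (by positivity) ee)) hsum1).symm
        _ < ⊤ := ENNReal.ofReal_lt_top
  · -- (ii) exact level
    intro k hk
    haveI := hμfprob
    have hset : {z : Fin k → ℝ | ∀ j, z j ≤ (k : ℝ)}
        = Set.univ.pi (fun _ : Fin k => Set.Iic (k:ℝ)) := by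
      ext z
      simp [Set.mem_pi, Pi.le_def]
    rw [← hμfdef, hset, Measure.pi_pi, Finset.prod_const, hμf_Iic k]
    have hk0 : k ≠ 0 := Nat.pos_iff_ne_zero.mp hk
    have hAk : A k = α ^ ((k:ℝ)⁻¹) := by simp [hAdef, hk0]
    rw [hAk, ← ENNReal.ofReal_pow (by positivity), Finset.card_univ, Fintype.card_fin]
    rw [← Real.rpow_natCast (α ^ ((k:ℝ)⁻¹)) k, ← Real.rpow_mul hα0.le,
      inv_mul_cancel₀ (by exact_mod_cast hk0 : ((k:ℝ) ≠ 0)), Real.rpow_one]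
    exact ENNReal.toReal_ofReal hα0.le
  · -- (iii)
    intro Ω' mΩ' ℙ' hℙ' Ψ hΨmeas hΨres
    haveI := hμgprob
    haveI := hℙ'
    set m : ℕ → ℕ := fun n => ⌈(n:ℝ) ^ qe⌉₊ with hmdef
    set L : ℕ → ℝ := fun n => (1 - T (m n)) ^ n with hLdef
    have hTm01 : ∀ n, 0 ≤ 1 - T (m n) := fun n => by linarith [hTle1 (m n)]
    have hLnonneg : ∀ n, 0 ≤ L n := fun n => pow_nonneg (hTm01 n) n
    have hlow : ∀ n : ℕ, ENNReal.ofReal (L n) ≤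
        ((Measure.pi fun _ : Fin n => μg).prod ℙ')
          {pu : (Fin n → ℝ) × Ω' | ∀ j, Ψ n pu.1 pu.2 j ≤ ((m n : ℕ) : ℝ)} := by
      intro n
      have hsub : ((Set.univ.pi fun _ : Fin n => Set.Iic ((m n : ℕ):ℝ)) ×ˢ
          (Set.univ : Set Ω'))
          ⊆ {pu : (Fin n → ℝ) × Ω' | ∀ j, Ψ n pu.1 pu.2 j ≤ ((m n : ℕ) : ℝ)} := by
        rintro ⟨x, ω⟩ hx j
        obtain ⟨i, hi⟩ := hΨres n x ω j
        show Ψ n x ω j ≤ _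
        rw [hi]
        exact hx.1 i (Set.mem_univ i)
      refine le_trans (le_of_eq ?_) (measure_mono hsub)
      rw [Measure.prod_prod, Measure.pi_pi, measure_univ, mul_one, Finset.prod_const,
        hμg_Iic (m n), Finset.card_univ, Fintype.card_fin, hLdef,
        ENNReal.ofReal_pow (hTm01 n)]
    -- the lower bound tends to 1
    have hE : Tendsto (fun n : ℕ => (n:ℝ) ^ (1 - qe*β)) atTop (𝓝 0) := by
      have h1 : Tendsto (fun x : ℝ => x ^ (-(qe*β - 1))) atTop (𝓝 0) :=
        tendsto_rpow_neg_atTop (by linarith)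
      have := h1.comp tendsto_natCast_atTop_atTop
      refine this.congr (fun n => ?_)
      norm_num
    have hLtendsto : Tendsto L atTop (𝓝 1) := by
      have hlo : Tendsto (fun n : ℕ => 1 - (n:ℝ) ^ (1 - qe*β)) atTop (𝓝 (1 - 0)) :=
        tendsto_const_nhds.sub hE
      rw [sub_zero] at hlo
      refine tendsto_of_tendsto_of_tendsto_of_le_of_le' hlo tendsto_const_nhds ?_ ?_
      · filter_upwards [eventually_ge_atTop 1] with n hn
        have hn0 : (0:ℝ) < n := by exact_mod_cast hn
        have hnq : (0:ℝ) < (n:ℝ) ^ qe := Real.rpow_pos_of_pos hn0 qe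
        have hceil : (n:ℝ) ^ qe ≤ ((m n : ℕ):ℝ) + 1 :=
          le_trans (Nat.le_ceil _) (by show ((⌈(n:ℝ) ^ qe⌉₊ : ℕ):ℝ) ≤ ((⌈(n:ℝ) ^ qe⌉₊ : ℕ):ℝ) + 1; linarith)
        have hTbound : T (m n) ≤ (n:ℝ) ^ (-(qe*β)) := by
          have h1 : T (m n) ≤ ((n:ℝ) ^ qe) ^ (-β) := by
            rw [hTdef]
            exact Real.rpow_le_rpow_of_nonpos hnq hceil (by linarith)
          rw [← Real.rpow_mul hn0.le] at h1
          have : qe * -β = -(qe*β) := by ring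
          rwa [this] at h1
        have hnT : (n:ℝ) * T (m n) ≤ (n:ℝ) ^ (1 - qe*β) := by
          have h2 : (n:ℝ) * T (m n) ≤ (n:ℝ) * (n:ℝ) ^ (-(qe*β)) :=
            mul_le_mul_of_nonneg_left hTbound hn0.le
          refine le_trans h2 (le_of_eq ?_)
          rw [← Real.rpow_one_add' hn0.le (by intro h; nlinarith)]
          norm_num [sub_eq_add_neg]
        have hbern : 1 - (n:ℝ) * T (m n) ≤ L n := by
          have := one_add_mul_le_pow (a := -(T (m n))) (by linarith [hTpos (m n), hTle1 (m n)]) n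
          rw [hLdef]
          calc 1 - (n:ℝ) * T (m n) = 1 + (n:ℝ) * (-(T (m n))) := by ring
            _ ≤ (1 + -(T (m n)))^n := this
            _ = (1 - T (m n))^n := by ring_nf
        linarith
      · filter_upwards with n
        exact pow_le_one₀ (hTm01 n) (by linarith [hTpos (m n)])
    -- squeeze the actual probabilities
    refine tendsto_of_tendsto_of_tendsto_of_le_of_le' hLtendsto tendsto_const_nhds ?_ ?_
    · filter_upwards with n
      have hfin : ((Measure.pi fun _ : Fin n => μg).prod ℙ')
          {pu : (Fin n → ℝ) × Ω' | ∀ j, Ψ n pu.1 pu.2 j ≤ ((m n : ℕ) : ℝ)} ≠ ⊤ :=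
        measure_ne_top _ _
      have := ENNReal.toReal_mono hfin (hlow n)
      rwa [ENNReal.toReal_ofReal (hLnonneg n)] at this
    · filter_upwards with n
      have h1 := ENNReal.toReal_mono (ENNReal.one_ne_top) (prob_le_one (μ :=
        ((Measure.pi fun _ : Fin n => μg).prod ℙ'))
        (s := {pu : (Fin n → ℝ) × Ω' | ∀ j, Ψ n pu.1 pu.2 j ≤ ((m n : ℕ) : ℝ)}))
      simpa using h1
end

section
/- Let M ∈ (0,∞) and let r : 𝒳 → [0,M] be measurable such that r·q = c·p μ-almost everywhere for some constant c > 0, where p is a probability density with respect to μ and P the probability measure with density p. Let X₁,…,X_n be i.i.d. with distribution Q and let U₁,…,U_n be i.i.d. uniform random variables on (0,1), independent of (X₁,…,X_n). Keep exactly those indices i ∈ {1,…,n} with U_i ≤ r(X_i)/M; let N be the number of kept indices and (X_{i₁},…,X_{i_N}) the kept observations listed in increasing order of index. Suppose φ_k : 𝒳^k → {0,1} (k ≥ 0) are measurable tests such that for every k ≥ 0, P(φ_k(Z₁,…,Z_k) = 1) = α_φ for Z₁,…,Z_k i.i.d. with distribution P. Then P(φ_N(X_{i₁},…,X_{i_N})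 = 1) = α_φ; in other words, the rejection-sampling test achieves exactly the rejection probability α_φ at every finite sample size n. -/
open MeasureTheory Filter Topology
open scoped ENNReal

section RejectionSamplingAux

variable {X : Type*} [MeasurableSpace X]

lemma rs_lintegral_pi_prod_fin (ν : Measure X) [SigmaFinite ν] :
    ∀ (m : ℕ) (f : Fin m → X → ℝ≥0∞), (∀ i, Measurable (f i)) →
      ∫⁻ x, ∏ i, f i (x i) ∂(Measure.pi fun _ : Fin m => ν) = ∏ i, ∫⁻ y, f i y ∂ν := by
  intro m
  induction m with
  | zero =>
      intro f _
      simp [lintegral_const, Measure.pi_univ]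
  | succ m ih =>
      intro f hf
      have hmp := measurePreserving_piFinSuccAbove (fun _ : Fin (m + 1) => ν) 0
      have hG : Measurable fun y : X × (Fin m → X) => f 0 y.1 * ∏ j, f j.succ (y.2 j) :=
        ((hf 0).comp measurable_fst).mul
          (Finset.measurable_prod _ fun j _ =>
            (hf j.succ).comp ((measurable_pi_apply j).comp measurable_snd))
      calc ∫⁻ x, ∏ i, f i (x i) ∂(Measure.pi fun _ : Fin (m + 1) => ν)
          = ∫⁻ x, (fun y : X × (Fin m → X) => f 0 y.1 * ∏ j, f j.succ (y.2 j))
              ((MeasurableEquiv.piFinSuccAbove (fun _ : Fin (m + 1) => X) 0) x)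
              ∂(Measure.pi fun _ : Fin (m + 1) => ν) := by
            refine lintegral_congr fun x => ?_
            rw [Fin.prod_univ_succ]
            rfl
        _ = ∫⁻ y, f 0 y.1 * ∏ j, f j.succ (y.2 j) ∂(ν.prod (Measure.pi fun _ : Fin m => ν)) :=
            hmp.lintegral_comp hG
        _ = (∫⁻ y, f 0 y ∂ν) * ∫⁻ z : Fin m → X, ∏ j : Fin m, f j.succ (z j)
              ∂(Measure.pi fun _ : Fin m => ν) :=
            lintegral_prod_mul (hf 0).aemeasurable
              (Finset.measurable_prod Finset.univ (fun (j : Fin m) _ =>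
                (hf j.succ).comp (measurable_pi_apply j))).aemeasurable
        _ = (∫⁻ y, f 0 y ∂ν) * ∏ j : Fin m, ∫⁻ y, f j.succ y ∂ν := by
            rw [ih _ (fun j => hf j.succ)]
        _ = ∏ i, ∫⁻ y, f i y ∂ν :=
            (Fin.prod_univ_succ fun i => ∫⁻ y, f i y ∂ν).symm

lemma rs_lintegral_pi_prod {ι : Type*} [Fintype ι] (ν : Measure X) [SigmaFinite ν]
    (f : ι → X → ℝ≥0∞) (hf : ∀ i, Measurable (f i)) :
    ∫⁻ x, ∏ i, f i (x i) ∂(Measure.pi fun _ : ι => ν) = ∏ i, ∫⁻ y, f i y ∂ν := by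
  set e : Fin (Fintype.card ι) ≃ ι := (Fintype.equivFin ι).symm with he
  have hmp := measurePreserving_piCongrLeft (fun _ : ι => ν) e
  have hG : Measurable fun x : ι → X => ∏ i, f i (x i) :=
    Finset.measurable_prod _ fun i _ => (hf i).comp (measurable_pi_apply i)
  calc ∫⁻ x, ∏ i, f i (x i) ∂(Measure.pi fun _ : ι => ν)
      = ∫⁻ x, (fun x : ι → X => ∏ i, f i (x i))
          ((MeasurableEquiv.piCongrLeft (fun _ : ι => X) e) x)
          ∂(Measure.pi fun _ : Fin (Fintype.card ι) => ν) := (hmp.lintegral_comp hG).symm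
    _ = ∫⁻ x, ∏ j, f (e j) (x j) ∂(Measure.pi fun _ : Fin (Fintype.card ι) => ν) := by
        refine lintegral_congr fun x => ?_
        simp only []
        rw [← e.prod_comp fun i => f i ((MeasurableEquiv.piCongrLeft (fun _ : ι => X) e) x i)]
        exact Finset.prod_congr rfl fun j _ => by
          rw [MeasurableEquiv.piCongrLeft_apply_apply]
    _ = ∏ j, ∫⁻ y, f (e j) y ∂ν :=
        rs_lintegral_pi_prod_fin ν _ _ (fun j => hf (e j))
    _ = ∏ i, ∫⁻ y, f i y ∂ν := e.prod_comp fun i => ∫⁻ y, f i y ∂ν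

lemma rs_setLIntegral_pi_prod {ι : Type*} [Fintype ι] (ν : Measure X) [SigmaFinite ν]
    (f : ι → X → ℝ≥0∞) (hf : ∀ i, Measurable (f i))
    (s : ι → Set X) (hs : ∀ i, MeasurableSet (s i)) :
    ∫⁻ x in Set.pi Set.univ s, ∏ i, f i (x i) ∂(Measure.pi fun _ : ι => ν)
      = ∏ i, ∫⁻ y in s i, f i y ∂ν := by
  have h1 : ∀ x : ι → X, (Set.pi Set.univ s).indicator (fun x => ∏ i, f i (x i)) x
      = ∏ i, (s i).indicator (f i) (x i) := by
    intro x
    by_cases hx : x ∈ Set.pi Set.univ s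
    · rw [Set.indicator_of_mem hx]
      exact Finset.prod_congr rfl fun i _ =>
        (Set.indicator_of_mem (hx i (Set.mem_univ i)) _).symm
    · rw [Set.indicator_of_notMem hx]
      have : ∃ i, x i ∉ s i := by
        by_contra h
        push_neg at h
        exact hx fun i _ => h i
      obtain ⟨i, hi⟩ := this
      exact (Finset.prod_eq_zero (Finset.mem_univ i)
        (by rw [Set.indicator_of_notMem hi])).symm
  calc ∫⁻ x in Set.pi Set.univ s, ∏ i, f i (x i) ∂(Measure.pi fun _ : ι => ν)
      = ∫⁻ x, (Set.pi Set.univ s).indicator (fun x => ∏ i, f i (x i)) x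
          ∂(Measure.pi fun _ : ι => ν) :=
        (lintegral_indicator (MeasurableSet.univ_pi hs) _).symm
    _ = ∫⁻ x, ∏ i, (s i).indicator (f i) (x i) ∂(Measure.pi fun _ : ι => ν) :=
        lintegral_congr h1
    _ = ∏ i, ∫⁻ y, (s i).indicator (f i) y ∂ν :=
        rs_lintegral_pi_prod ν _ (fun i => (hf i).indicator (hs i))
    _ = ∏ i, ∫⁻ y in s i, f i y ∂ν := by
        exact Finset.prod_congr rfl fun i _ => lintegral_indicator (hs i) _

lemma rs_pi_smul {ι : Type*} [Fintype ι] (P : Measure X) [IsProbabilityMeasure P]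
    (ρ : ℝ≥0∞) (hρ : ρ ≠ ∞) :
    Measure.pi (fun _ : ι => ρ • P) = (ρ ^ Fintype.card ι) • Measure.pi fun _ : ι => P := by
  haveI : IsFiniteMeasure (ρ • P) := by
    refine ⟨?_⟩
    rw [Measure.smul_apply, smul_eq_mul, measure_univ, mul_one]
    exact hρ.lt_top
  refine Measure.pi_eq (μ := fun _ : ι => ρ • P) fun s hs => ?_
  simp only [Measure.smul_apply, smul_eq_mul, Measure.pi_pi, Finset.prod_mul_distrib,
    Finset.prod_const, Finset.card_univ]

lemma rs_pi_withDensity {ι : Type*} [Fintype ι] (ν P : Measure X) [SigmaFinite ν]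
    [IsProbabilityMeasure P]
    (w : X → ℝ≥0∞) (hw : Measurable w) (ρ : ℝ≥0∞) (hρ : ρ ≠ ∞)
    (hwd : ν.withDensity w = ρ • P) :
    (Measure.pi fun _ : ι => ν).withDensity (fun x => ∏ i, w (x i))
      = (ρ ^ Fintype.card ι) • Measure.pi fun _ : ι => P := by
  haveI : IsFiniteMeasure (ρ • P) := by
    refine ⟨?_⟩
    rw [Measure.smul_apply, smul_eq_mul, measure_univ, mul_one]
    exact hρ.lt_top
  rw [← rs_pi_smul P ρ hρ]
  refine (Measure.pi_eq (μ := fun _ : ι => ρ • P) fun s hs => ?_).symm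
  rw [withDensity_apply _ (MeasurableSet.univ_pi hs),
    rs_setLIntegral_pi_prod ν (fun _ => w) (fun _ => hw) s hs]
  exact Finset.prod_congr rfl fun i _ => by rw [← withDensity_apply _ (hs i), hwd]

lemma rs_unif_Iic {t : ℝ} (h0 : 0 ≤ t) (h1 : t ≤ 1) :
    (volume.restrict (Set.Ioo (0 : ℝ) 1)) (Set.Iic t) = ENNReal.ofReal t := by
  rw [Measure.restrict_apply measurableSet_Iic]
  refine le_antisymm ?_ ?_
  · calc volume (Set.Iic t ∩ Set.Ioo 0 1) ≤ volume (Set.Ioc 0 t) :=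
        measure_mono fun z hz => ⟨hz.2.1, hz.1⟩
    _ = ENNReal.ofReal t := by rw [Real.volume_Ioc, sub_zero]
  · calc ENNReal.ofReal t = volume (Set.Ioo 0 t) := by rw [Real.volume_Ioo, sub_zero]
    _ ≤ volume (Set.Iic t ∩ Set.Ioo 0 1) :=
        measure_mono fun z hz => ⟨hz.2.le, hz.1, lt_of_lt_of_le hz.2 h1⟩


lemma rs_key {𝒳 : Type*} [MeasurableSpace 𝒳]
    (Q P : Measure 𝒳) [IsProbabilityMeasure Q] [IsProbabilityMeasure P]
    (s : 𝒳 → ℝ) (hs : Measurable s)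
    (w : 𝒳 → ℝ≥0∞) (hwmeas : Measurable w)
    (ρ : ℝ≥0∞) (hrho : ρ ≠ ∞)
    (hQw : Q.withDensity w = ρ • P)
    (𝒰 : Measure ℝ) [IsProbabilityMeasure 𝒰]
    (hcdf : ∀ x, 𝒰 (Set.Iic (s x)) = w x)
    (A : ∀ k : ℕ, Set (Fin k → 𝒳)) (hA : ∀ k, MeasurableSet (A k))
    (n : ℕ) :
    ((Measure.pi fun _ : Fin n => Q).prod (Measure.pi fun _ : Fin n => 𝒰))
      {pu : (Fin n → 𝒳) × (Fin n → ℝ) |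
        (fun j => pu.1
            (((Finset.univ.filter fun i : Fin n =>
                pu.2 i ≤ s (pu.1 i)).orderIsoOfFin rfl j : Fin n)))
          ∈ A (Finset.univ.filter fun i : Fin n => pu.2 i ≤ s (pu.1 i)).card}
      = ∑ S ∈ (Finset.univ : Finset (Fin n)).powerset,
          (Measure.pi fun _ : Fin S.card => P) (A S.card)
            * (ρ ^ S.card * (1 - ρ) ^ (n - S.card)) := by
  classical
  have hw1 : ∀ y, w y ≤ 1 := fun y => by rw [← hcdf y]; exact prob_le_one
  have hρQ : ∫⁻ y, w y ∂Q = ρ := by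
    rw [← setLIntegral_univ, ← withDensity_apply _ MeasurableSet.univ, hQw,
      Measure.smul_apply, measure_univ, smul_eq_mul, mul_one]
  set CS : Finset (Fin n) → Set (Fin n → 𝒳) := fun S =>
    {x | (fun j => x ((S.orderIsoOfFin rfl j : Fin n))) ∈ A S.card} with hCS
  set ES : Finset (Fin n) → Set ((Fin n → 𝒳) × (Fin n → ℝ)) := fun S =>
    {pu | ∀ i : Fin n, (pu.2 i ≤ s (pu.1 i) ↔ i ∈ S)} ∩ {pu | pu.1 ∈ CS S} with hES
  have hCSmeas : ∀ S : Finset (Fin n), MeasurableSet (CS S) := fun S =>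
    (measurable_pi_lambda _ fun j => measurable_pi_apply _) (hA S.card)
  have hESmeas : ∀ S : Finset (Fin n), MeasurableSet (ES S) := by
    intro S
    refine MeasurableSet.inter ?_ (measurable_fst (hCSmeas S))
    have h0 : {pu : (Fin n → 𝒳) × (Fin n → ℝ) | ∀ i : Fin n, (pu.2 i ≤ s (pu.1 i) ↔ i ∈ S)}
        = ⋂ i : Fin n, {pu : (Fin n → 𝒳) × (Fin n → ℝ) | (pu.2 i ≤ s (pu.1 i) ↔ i ∈ S)} := by
      ext pu; simp [Set.mem_iInter]
    rw [h0]
    refine MeasurableSet.iInter fun i => ?_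
    have hle : MeasurableSet {pu : (Fin n → 𝒳) × (Fin n → ℝ) | pu.2 i ≤ s (pu.1 i)} :=
      measurableSet_le
        (show Measurable fun pu : (Fin n → 𝒳) × (Fin n → ℝ) => pu.2 i from
          (measurable_pi_apply i).comp measurable_snd)
        (show Measurable fun pu : (Fin n → 𝒳) × (Fin n → ℝ) => s (pu.1 i) from
          hs.comp ((measurable_pi_apply i).comp measurable_fst))
    by_cases hi : i ∈ S
    · simp only [hi, iff_true]; exact hle
    · simp only [hi, iff_false]; exact hle.compl
  have hcongr : ∀ (F S : Finset (Fin n)), F = S → ∀ x : Fin n → 𝒳,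
      ((fun j => x ((F.orderIsoOfFin rfl j : Fin n))) ∈ A F.card ↔ x ∈ CS S) := by
    rintro F S rfl x; exact Iff.rfl
  have hsplit : {pu : (Fin n → 𝒳) × (Fin n → ℝ) |
        (fun j => pu.1
            (((Finset.univ.filter fun i : Fin n =>
                pu.2 i ≤ s (pu.1 i)).orderIsoOfFin rfl j : Fin n)))
          ∈ A (Finset.univ.filter fun i : Fin n => pu.2 i ≤ s (pu.1 i)).card}
      = ⋃ S ∈ (Finset.univ : Finset (Fin n)).powerset, ES S := by
    ext pu
    simp only [Set.mem_setOf_eq, Set.mem_iUnion, Finset.mem_powerset, Finset.subset_univ,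
      exists_true_left, true_and]
    constructor
    · intro h
      exact ⟨Finset.univ.filter fun i : Fin n => pu.2 i ≤ s (pu.1 i),
        ⟨fun i => by simp [Finset.mem_filter], (hcongr _ _ rfl pu.1).mp h⟩⟩
    · intro h
      obtain ⟨S, h1, h2⟩ := h
      have hTS : (Finset.univ.filter fun i : Fin n => pu.2 i ≤ s (pu.1 i)) = S := by
        ext i; simp only [Finset.mem_filter, Finset.mem_univ, true_and]; exact h1 i
      exact (hcongr _ _ hTS pu.1).mpr h2
  have hdisj : (↑(Finset.univ : Finset (Fin n)).powerset :
      Set (Finset (Fin n))).PairwiseDisjoint ES := by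
    intro S _ S' _ hne
    refine Set.disjoint_left.mpr fun pu hpu hpu' => hne ?_
    exact Finset.ext fun i => ((hpu.1 i).symm.trans (hpu'.1 i))
  rw [hsplit, measure_biUnion_finset hdisj (fun S _ => hESmeas S)]
  refine Finset.sum_congr rfl fun S _ => ?_
  rw [Measure.prod_apply (hESmeas S)]
  have hslice : ∀ x : Fin n → 𝒳,
      (Measure.pi fun _ : Fin n => 𝒰) (Prod.mk x ⁻¹' ES S)
        = (CS S).indicator (fun x => ∏ i, if i ∈ S then w (x i) else 1 - w (x i)) x := by
    intro x
    by_cases hx : x ∈ CS S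
    · have hpre : Prod.mk x ⁻¹' ES S
          = Set.pi Set.univ (fun i => if i ∈ S then Set.Iic (s (x i))
              else (Set.Iic (s (x i)))ᶜ) := by
        ext u
        simp only [hES, Set.mem_preimage, Set.mem_inter_iff, Set.mem_setOf_eq, Set.mem_pi,
          Set.mem_univ, true_implies]
        constructor
        · rintro ⟨h1, -⟩ i
          by_cases hi : i ∈ S
          · simp only [hi, if_true, Set.mem_Iic]; exact (h1 i).mpr hi
          · simp only [hi, if_false, Set.mem_compl_iff, Set.mem_Iic]
            exact fun hc => hi ((h1 i).mp hc)
        · intro h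
          refine ⟨fun i => ?_, hx⟩
          by_cases hi : i ∈ S
          · have := h i; simp only [hi, if_true, Set.mem_Iic] at this; simp [hi, this]
          · have := h i; simp only [hi, if_false, Set.mem_compl_iff, Set.mem_Iic] at this
            simp [hi, this]
      rw [hpre, Measure.pi_pi, Set.indicator_of_mem hx]
      refine Finset.prod_congr rfl fun i _ => ?_
      by_cases hi : i ∈ S
      · simp only [hi, if_true]; exact hcdf (x i)
      · simp only [hi, if_false]
        rw [prob_compl_eq_one_sub measurableSet_Iic, hcdf (x i)]
    · have hpre : Prod.mk x ⁻¹' ES S = ∅ := by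
        ext u
        simp only [hES, Set.mem_preimage, Set.mem_inter_iff, Set.mem_setOf_eq,
          Set.mem_empty_iff_false, iff_false, not_and]
        exact fun _ => hx
      rw [hpre, measure_empty, Set.indicator_of_notMem hx]
  set e' : Fin S.card ≃ {y : Fin n // y ∈ S} := (S.orderIsoOfFin rfl).toEquiv with he'
  set mS : ({y : Fin n // y ∈ S} → 𝒳) → (Fin S.card → 𝒳) := fun y j => y (e' j) with hmS
  set g1 : ({y : Fin n // y ∈ S} → 𝒳) → ℝ≥0∞ :=
    (mS ⁻¹' A S.card).indicator (fun y => ∏ j, w (y j)) with hg1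
  set g2 : ({y : Fin n // ¬ y ∈ S} → 𝒳) → ℝ≥0∞ := fun z => ∏ j, (1 - w (z j)) with hg2
  have hmSmeas : Measurable mS := measurable_pi_lambda _ fun j => measurable_pi_apply _
  have hmA : MeasurableSet (mS ⁻¹' A S.card) := hmSmeas (hA S.card)
  have hg1meas : Measurable g1 :=
    (Finset.measurable_prod _ fun j _ => hwmeas.comp (measurable_pi_apply j)).indicator hmA
  have hg2meas : Measurable g2 :=
    Finset.measurable_prod _ fun j _ => (measurable_const.sub hwmeas).comp (measurable_pi_apply j)
  have hpoint : ∀ x : Fin n → 𝒳,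
      (CS S).indicator (fun x => ∏ i, if i ∈ S then w (x i) else 1 - w (x i)) x
        = g1 (fun j => x ↑j) * g2 (fun j => x ↑j) := by
    intro x
    have hmem : ((fun j : {y : Fin n // y ∈ S} => x ↑j) ∈ mS ⁻¹' A S.card) ↔ x ∈ CS S :=
      Iff.rfl
    by_cases hx : x ∈ CS S
    · rw [Set.indicator_of_mem hx, hg1]
      rw [Set.indicator_of_mem (hmem.mpr hx)]
      rw [Finset.prod_ite (fun i => w (x i)) (fun i => 1 - w (x i))]
      congr 1
      · rw [Finset.filter_mem_eq_inter, Finset.univ_inter, ← Finset.prod_coe_sort]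
      · simp only [hg2]
        have hsub : ∏ i ∈ Sᶜ, (1 - w (x i)) = ∏ a : {y : Fin n // y ∉ S}, (1 - w (x ↑a)) :=
          Finset.prod_subtype (p := fun i : Fin n => i ∉ S) Sᶜ
            (fun i => Finset.mem_compl) (fun i => 1 - w (x i))
        rw [← hsub]
        congr 1
        ext i
        simp [Finset.mem_compl]
    · rw [Set.indicator_of_notMem hx, hg1, Set.indicator_of_notMem (fun hc => hx (hmem.mp hc)),
        zero_mul]
  have hmp := measurePreserving_piEquivPiSubtypeProd (fun _ : Fin n => Q) (fun i : Fin n => i ∈ S)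
  have hGmeas : Measurable fun yz : ({y : Fin n // y ∈ S} → 𝒳) × ({y : Fin n // ¬ y ∈ S} → 𝒳) =>
      g1 yz.1 * g2 yz.2 := (hg1meas.comp measurable_fst).mul (hg2meas.comp measurable_snd)
  have hint2 : ∫⁻ z, g2 z ∂(Measure.pi fun _ : {y : Fin n // ¬ y ∈ S} => Q)
      = (1 - ρ) ^ (n - S.card) := by
    rw [hg2, rs_lintegral_pi_prod Q (fun _ y => 1 - w y) (fun _ => measurable_const.sub hwmeas)]
    have h1w : ∫⁻ y, (1 - w y) ∂Q = 1 - ρ := by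
      rw [lintegral_sub hwmeas (by rw [hρQ]; exact hrho) (Filter.Eventually.of_forall hw1),
        lintegral_one, measure_univ, hρQ]
    rw [h1w, Finset.prod_const, Finset.card_univ]
    congr 1
    rw [Fintype.card_subtype_compl, Fintype.card_fin]
    congr 1
    exact Fintype.card_coe S
  have hint1 : ∫⁻ y, g1 y ∂(Measure.pi fun _ : {y : Fin n // y ∈ S} => Q)
      = ρ ^ S.card * (Measure.pi fun _ : Fin S.card => P) (A S.card) := by
    rw [hg1, lintegral_indicator hmA, ← withDensity_apply _ hmA,
      rs_pi_withDensity Q P w hwmeas ρ hrho hQw, Measure.smul_apply, smul_eq_mul,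
      Fintype.card_coe]
    congr 1
    have hmp2 := MeasurePreserving.symm
      (MeasurableEquiv.piCongrLeft (fun _ : {y : Fin n // y ∈ S} => 𝒳) e')
      (measurePreserving_piCongrLeft (fun _ : {y : Fin n // y ∈ S} => P) e')
    have hmm : mS ⁻¹' A S.card
        = (MeasurableEquiv.piCongrLeft (fun _ : {y : Fin n // y ∈ S} => 𝒳) e').symm ⁻¹'
            A S.card := by
      have : mS = (MeasurableEquiv.piCongrLeft (fun _ : {y : Fin n // y ∈ S} => 𝒳) e').symm := by
        funext y
        funext j
        rw [hmS]
        show y (e' j) = (Equiv.piCongrLeft (fun _ => 𝒳) e').symm y j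
        rw [Equiv.piCongrLeft_symm_apply]
      rw [this]
    rw [hmm, hmp2.measure_preimage (hA S.card).nullMeasurableSet]
  have h := hmp.lintegral_comp hGmeas
  rw [lintegral_prod_mul hg1meas.aemeasurable hg2meas.aemeasurable] at h
  have h0 : ∫⁻ x, (Measure.pi fun _ : Fin n => 𝒰) (Prod.mk x ⁻¹' ES S)
        ∂(Measure.pi fun _ : Fin n => Q)
      = ∫⁻ x, (fun yz : ({y : Fin n // y ∈ S} → 𝒳) × ({y : Fin n // y ∉ S} → 𝒳) =>
          g1 yz.1 * g2 yz.2)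
          ((MeasurableEquiv.piEquivPiSubtypeProd (fun _ : Fin n => 𝒳) (fun i : Fin n => i ∈ S)) x)
          ∂(Measure.pi fun _ : Fin n => Q) :=
    lintegral_congr fun x => by rw [hslice x, hpoint x]; rfl
  rw [h0, h]
  have hfix : (∫⁻ y, g1 y ∂(Measure.pi fun _ : {y : Fin n // y ∈ S} => Q))
      * (∫⁻ z, g2 z ∂(Measure.pi fun _ : {y : Fin n // y ∉ S} => Q))
      = (Measure.pi fun _ : Fin S.card => P) (A S.card)
          * (ρ ^ S.card * (1 - ρ) ^ (n - S.card)) := by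
    rw [hint1, hint2]; ring
  rw [← hfix]
  congr!


end RejectionSamplingAux

/-- **Exact level of the rejection-sampling test (bounded weights).** Let `r : 𝒳 → [0,M]`
with `r·q = c·p` μ-a.e. for some `c > 0`, where `q` and `p` are the densities of the
observed distribution `Q` and the target distribution `P`. Let `X₁,…,X_n` be i.i.d. `Q` and
`U₁,…,U_n` i.i.d. uniform on `(0,1)`, independent of the data (joint law
`Q^⊗n ⊗ Unif(0,1)^⊗n`). Keep exactly the indices `i` with `U_i ≤ r(X_i)/M`, let `N` be
their number and apply the test `φ_N` (with acceptance region `A N`) to the kept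
observations listed in increasing order of index. If `P(φ_k(Z₁,…,Z_k) = 1) = α` for every
`k ≥ 0` under i.i.d. target samples `Z₁,…,Z_k ~ P`, then the rejection-sampling test
rejects with probability exactly `α` at every finite sample size `n`. -/
theorem rejection_sampling_exact_level
    {𝒳 : Type*} [MeasurableSpace 𝒳]
    (μ : Measure 𝒳) [SigmaFinite μ]
    (q p : 𝒳 → ℝ) (hq : Measurable q) (hp : Measurable p)
    (hq0 : ∀ x, 0 ≤ q x) (hp0 : ∀ x, 0 ≤ p x)
    (Q : Measure 𝒳) [IsProbabilityMeasure Q]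
    (hQ : Q = μ.withDensity fun x => ENNReal.ofReal (q x))
    (P : Measure 𝒳) [IsProbabilityMeasure P]
    (hP : P = μ.withDensity fun x => ENNReal.ofReal (p x))
    (M : ℝ) (hM : 0 < M)
    (r : 𝒳 → ℝ) (hr : Measurable r) (hr0 : ∀ x, 0 ≤ r x) (hrM : ∀ x, r x ≤ M)
    (c : ℝ) (hc : 0 < c)
    (hrc : ∀ᵐ x ∂μ, r x * q x = c * p x)
    (A : ∀ k : ℕ, Set (Fin k → 𝒳)) (hA : ∀ k, MeasurableSet (A k))
    (α : ℝ)
    (hα : ∀ k : ℕ, ((Measure.pi fun _ : Fin k => P) (A k)).toReal = α)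
    (n : ℕ) :
    (((Measure.pi fun _ : Fin n => Q).prod
        (Measure.pi fun _ : Fin n => volume.restrict (Set.Ioo (0 : ℝ) 1)))
      {pu : (Fin n → 𝒳) × (Fin n → ℝ) |
        (fun j => pu.1
            (((Finset.univ.filter fun i : Fin n =>
                pu.2 i ≤ r (pu.1 i) / M).orderIsoOfFin rfl j : Fin n)))
          ∈ A (Finset.univ.filter fun i : Fin n =>
                pu.2 i ≤ r (pu.1 i) / M).card}).toReal = α := by
  classical
  have hα0 : 0 ≤ α := by rw [← hα 0]; exact ENNReal.toReal_nonneg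
  haveI hUprob : IsProbabilityMeasure (volume.restrict (Set.Ioo (0 : ℝ) 1)) :=
    ⟨by rw [Measure.restrict_apply_univ, Real.volume_Ioo]; norm_num⟩
  set w : 𝒳 → ℝ≥0∞ := fun x => ENNReal.ofReal (r x / M) with hwdef
  have hwmeas : Measurable w := ENNReal.measurable_ofReal.comp (hr.div_const M)
  set ρ : ℝ≥0∞ := ENNReal.ofReal (c / M) with hρdef
  have hrho : ρ ≠ ∞ := ENNReal.ofReal_ne_top
  have hQw : Q.withDensity w = ρ • P := by
    rw [hQ, hP, ← withDensity_mul _ hq.ennreal_ofReal hwmeas]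
    have hae : ((fun x => ENNReal.ofReal (q x)) * w)
        =ᵐ[μ] (ρ • fun x => ENNReal.ofReal (p x)) := by
      filter_upwards [hrc] with x hx
      simp only [hwdef, Pi.mul_apply, Pi.smul_apply, smul_eq_mul, hρdef]
      rw [← ENNReal.ofReal_mul (hq0 x), ← ENNReal.ofReal_mul (by positivity)]
      congr 1
      have h1 : q x * (r x / M) = (r x * q x) / M := by ring
      rw [h1, hx]
      ring
    rw [withDensity_congr_ae hae, withDensity_smul ρ hp.ennreal_ofReal]
  have hcdf : ∀ x : 𝒳, (volume.restrict (Set.Ioo (0 : ℝ) 1)) (Set.Iic (r x / M)) = w x :=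
    fun x => rs_unif_Iic (div_nonneg (hr0 x) hM.le) ((div_le_one hM).mpr (hrM x))
  have hkey := rs_key Q P (fun x => r x / M) (hr.div_const M) w hwmeas ρ hrho hQw
    (volume.restrict (Set.Ioo (0 : ℝ) 1)) hcdf A hA n
  rw [hkey]
  have hρ1 : ρ ≤ 1 := by
    have h1 : (Q.withDensity w) Set.univ ≤ 1 := by
      rw [withDensity_apply _ MeasurableSet.univ, setLIntegral_univ]
      calc ∫⁻ y, w y ∂Q ≤ ∫⁻ _, 1 ∂Q := lintegral_mono fun y => by
            rw [hwdef, ← ENNReal.ofReal_one]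
            exact ENNReal.ofReal_le_ofReal ((div_le_one hM).mpr (hrM y))
        _ = 1 := by rw [lintegral_one, measure_univ]
    rwa [hQw, Measure.smul_apply, measure_univ, smul_eq_mul, mul_one] at h1
  have hofα : ∀ k : ℕ, (Measure.pi fun _ : Fin k => P) (A k) = ENNReal.ofReal α := by
    intro k
    rw [← hα k, ENNReal.ofReal_toReal (measure_ne_top _ _)]
  have hsum : ∑ S ∈ (Finset.univ : Finset (Fin n)).powerset,
      (Measure.pi fun _ : Fin S.card => P) (A S.card)
        * (ρ ^ S.card * (1 - ρ) ^ (n - S.card))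
      = ENNReal.ofReal α := by
    have hbin : ∑ S ∈ (Finset.univ : Finset (Fin n)).powerset,
        ρ ^ S.card * (1 - ρ) ^ (n - S.card) = 1 := by
      have hpa := Finset.prod_add (fun _ : Fin n => ρ) (fun _ : Fin n => 1 - ρ) Finset.univ
      rw [add_tsub_cancel_of_le hρ1] at hpa
      simp only [Finset.prod_const, one_pow] at hpa
      calc ∑ S ∈ (Finset.univ : Finset (Fin n)).powerset,
            ρ ^ S.card * (1 - ρ) ^ (n - S.card)
          = ∑ S ∈ (Finset.univ : Finset (Fin n)).powerset,
              ρ ^ S.card * (1 - ρ) ^ (Finset.univ \ S).card :=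
            Finset.sum_congr rfl fun S _ => by
              rw [Finset.card_sdiff_of_subset (Finset.subset_univ S), Finset.card_univ, Fintype.card_fin]
        _ = 1 := hpa.symm
    calc ∑ S ∈ (Finset.univ : Finset (Fin n)).powerset,
          (Measure.pi fun _ : Fin S.card => P) (A S.card)
            * (ρ ^ S.card * (1 - ρ) ^ (n - S.card))
        = ∑ S ∈ (Finset.univ : Finset (Fin n)).powerset,
            ENNReal.ofReal α * (ρ ^ S.card * (1 - ρ) ^ (n - S.card)) :=
          Finset.sum_congr rfl fun S _ => by rw [hofα S.card]
      _ = ENNReal.ofReal α * ∑ S ∈ (Finset.univ : Finset (Fin n)).powerset,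
            ρ ^ S.card * (1 - ρ) ^ (n - S.card) := by rw [Finset.mul_sum]
      _ = ENNReal.ofReal α := by rw [hbin, mul_one]
  rw [hsum, ENNReal.toReal_ofReal hα0]
end

section
/- For all integers 1 ≤ m ≤ n, E_Q[c(n,m)] = P(φ_m(Z₁,…,Z_m) = 1), where Z₁,…,Z_m are i.i.d. random variables with distribution P; that is, the numerator of the DRPL rejection probability is an unbiased estimator of the rejection probability of φ_m under the target distribution P. -/
open MeasureTheory Filter Topology
open scoped ENNReal

section DRPLaux
variable {𝒳 : Type*} [MeasurableSpace 𝒳]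

lemma aux_lintegral_pi_prod {m : ℕ} (Q : Measure 𝒳) [SigmaFinite Q]
    (f : Fin m → 𝒳 → ℝ≥0∞) (hf : ∀ ℓ, Measurable (f ℓ)) :
    ∫⁻ y : Fin m → 𝒳, ∏ ℓ, f ℓ (y ℓ) ∂(Measure.pi fun _ => Q)
      = ∏ ℓ, ∫⁻ x, f ℓ x ∂Q := by
  induction m with
  | zero => simp [lintegral_const, Measure.pi_univ]
  | succ m ih =>
      have hmp := (measurePreserving_piFinSuccAbove (fun _ : Fin (m + 1) => Q) 0).symm
      have hmeas : Measurable fun y : Fin (m + 1) → 𝒳 => ∏ ℓ, f ℓ (y ℓ) :=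
        Finset.measurable_prod _ fun ℓ _ => (hf ℓ).comp (measurable_pi_apply ℓ)
      rw [← hmp.lintegral_comp hmeas]
      simp only [MeasurableEquiv.piFinSuccAbove_symm_apply, Fin.insertNthEquiv,
        Equiv.coe_fn_mk]
      simp only [Fin.insertNth_zero, Fin.prod_univ_succ, Fin.cons_zero, Fin.cons_succ, Fin.zero_succAbove, cast_eq]
      rw [lintegral_prod_mul (f := f 0) (g := fun y : Fin m → 𝒳 => ∏ ℓ, f ℓ.succ (y ℓ))
        (hf 0).aemeasurable
        (Finset.measurable_prod _ fun ℓ _ => ((hf ℓ.succ).comp (measurable_pi_apply ℓ))).aemeasurable,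
        ih _ fun ℓ => hf ℓ.succ]

lemma aux_pi_withDensity {m : ℕ} (Q : Measure 𝒳) [SigmaFinite Q]
    (ρ : 𝒳 → ℝ≥0∞) (hρ : Measurable ρ) [SigmaFinite (Q.withDensity ρ)] :
    Measure.pi (fun _ : Fin m => Q.withDensity ρ)
      = (Measure.pi fun _ : Fin m => Q).withDensity fun y => ∏ ℓ, ρ (y ℓ) := by
  refine Measure.pi_eq fun s hs => ?_
  rw [withDensity_apply _ (MeasurableSet.univ_pi hs),
    ← lintegral_indicator (MeasurableSet.univ_pi hs)]
  have hind : ∀ y : Fin m → 𝒳,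
      (Set.pi Set.univ s).indicator (fun y => ∏ ℓ, ρ (y ℓ)) y
        = ∏ ℓ, (s ℓ).indicator ρ (y ℓ) := by
    intro y
    by_cases hy : y ∈ Set.pi Set.univ s
    · rw [Set.indicator_of_mem hy]
      exact Finset.prod_congr rfl fun ℓ _ =>
        (Set.indicator_of_mem (hy ℓ (Set.mem_univ ℓ)) ρ).symm
    · rw [Set.indicator_of_notMem hy]
      have : ¬∀ ℓ : Fin m, y ℓ ∈ s ℓ := fun h => hy fun ℓ _ => h ℓ
      obtain ⟨ℓ, hℓ⟩ := not_forall.mp this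
      exact (Finset.prod_eq_zero (Finset.mem_univ ℓ)
        (by rw [Set.indicator_of_notMem hℓ])).symm
  simp_rw [hind]
  rw [aux_lintegral_pi_prod Q _ fun ℓ => hρ.indicator (hs ℓ)]
  exact Finset.prod_congr rfl fun ℓ _ => by
    rw [lintegral_indicator (hs ℓ), withDensity_apply _ (hs ℓ)]

lemma aux_measurePreserving_comp {n m : ℕ} (Q : Measure 𝒳) [IsProbabilityMeasure Q]
    {i : Fin m → Fin n} (hi : Function.Injective i) :
    MeasurePreserving (fun x : Fin n → 𝒳 => fun ℓ => x (i ℓ))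
      (Measure.pi fun _ : Fin n => Q) (Measure.pi fun _ : Fin m => Q) := by
  classical
  have hmeas : Measurable fun x : Fin n → 𝒳 => fun ℓ => x (i ℓ) :=
    measurable_pi_lambda _ fun ℓ => measurable_pi_apply _
  refine ⟨hmeas, (Measure.pi_eq fun s hs => ?_).symm⟩
  rw [Measure.map_apply hmeas (MeasurableSet.univ_pi hs)]
  set t : Fin n → Set 𝒳 := fun j => if h : ∃ ℓ, i ℓ = j then s h.choose else Set.univ with ht
  have hti : ∀ ℓ, t (i ℓ) = s ℓ := by
    intro ℓ
    have hex : ∃ ℓ', i ℓ' = i ℓ := ⟨ℓ, rfl⟩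
    rw [ht]; simp only [dif_pos hex]
    exact congrArg s (hi hex.choose_spec)
  have hpre : (fun x : Fin n → 𝒳 => fun ℓ => x (i ℓ)) ⁻¹' Set.pi Set.univ s
      = Set.pi Set.univ t := by
    ext x
    simp only [Set.mem_preimage, Set.mem_pi, Set.mem_univ, true_implies]
    constructor
    · intro h j
      by_cases hj : ∃ ℓ, i ℓ = j
      · rw [ht]; simp only [dif_pos hj]
        have := h hj.choose
        rwa [hj.choose_spec] at this
      · rw [ht]; simp only [dif_neg hj]; exact Set.mem_univ _
    · intro h ℓ
      have := h (i ℓ)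
      rwa [hti ℓ] at this
  rw [hpre, Measure.pi_pi]
  calc ∏ j, Q (t j) = ∏ j ∈ Finset.image i Finset.univ, Q (t j) := by
        refine (Finset.prod_subset (Finset.subset_univ _) fun j _ hj => ?_).symm
        have hj' : ¬∃ ℓ, i ℓ = j := by
          intro ⟨ℓ, hℓ⟩; exact hj (Finset.mem_image.mpr ⟨ℓ, Finset.mem_univ ℓ, hℓ⟩)
        rw [ht]; simp only [dif_neg hj']; exact measure_univ
    _ = ∏ ℓ, Q (t (i ℓ)) := Finset.prod_image fun a _ b _ h => hi h
    _ = ∏ ℓ, Q (s ℓ) := Finset.prod_congr rfl fun ℓ _ => by rw [hti ℓ]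

end DRPLaux

/-- `cStat r A n m x` is the numerator statistic
`c(n,m) = ((n-m)!/n!) · Σ_{(i₁,…,i_m) distinct} (∏_ℓ r̄(x_{i_ℓ})) · 1{(x_{i₁},…,x_{i_m}) ∈ A m}`,
where `A m` is the acceptance region `{φ_m = 1}` of the test `φ_m`, and the sum ranges over
all `m`-tuples of pairwise distinct indices in `{1,…,n}`. -/
noncomputable def cStat {𝒳 : Type*} (r : 𝒳 → ℝ) (A : ∀ k : ℕ, Set (Fin k → 𝒳))
    (n m : ℕ) (x : Fin n → 𝒳) : ℝ :=
  ((n - m).factorial : ℝ) / (n.factorial : ℝ) *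
    ∑ i ∈ Finset.univ.filter (fun i : Fin m → Fin n => Function.Injective i),
      (∏ ℓ, r (x (i ℓ))) * (A m).indicator (fun _ => (1 : ℝ)) (fun ℓ => x (i ℓ))

/-- **Unbiasedness of the DRPL numerator.** For all integers `1 ≤ m ≤ n`,
`E_Q[c(n,m)] = P(φ_m(Z₁,…,Z_m) = 1)` where `Z₁,…,Z_m` are i.i.d. with the target
distribution `P`; the expectation on the left is taken under the i.i.d. law `Q^⊗n`. -/
theorem drpl_numerator_unbiased
    {𝒳 : Type*} [MeasurableSpace 𝒳]
    (μ : Measure 𝒳) [SigmaFinite μ]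
    (q : 𝒳 → ℝ≥0∞) (hq : Measurable q)
    (Q : Measure 𝒳) [IsProbabilityMeasure Q] (hQ : Q = μ.withDensity q)
    (r : 𝒳 → ℝ) (hr : Measurable r) (hr0 : ∀ x, 0 ≤ r x)
    (hr1 : ∫ x, r x ∂Q = 1)
    (P : Measure 𝒳) [IsProbabilityMeasure P]
    (hP : P = μ.withDensity fun x => ENNReal.ofReal (r x) * q x)
    (A : ∀ k : ℕ, Set (Fin k → 𝒳)) (hA : ∀ k, MeasurableSet (A k))
    (n m : ℕ) (hm1 : 1 ≤ m) (hmn : m ≤ n) :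
    ∫ x, cStat r A n m x ∂(Measure.pi fun _ : Fin n => Q)
      = ((Measure.pi fun _ : Fin m => P) (A m)).toReal := by
  classical
  set ρ : 𝒳 → ℝ≥0∞ := fun x => ENNReal.ofReal (r x) with hρdef
  have hρ : Measurable ρ := hr.ennreal_ofReal
  have hPQ : P = Q.withDensity ρ := by
    rw [hP, hQ, ← withDensity_mul μ hq hρ]
    exact congrArg _ (funext fun x => mul_comm _ _)
  have hri : Integrable r Q := by
    by_contra h
    rw [integral_undef h] at hr1
    exact one_ne_zero hr1.symm
  haveI : SigmaFinite (Q.withDensity ρ) := by rw [← hPQ]; infer_instance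
  set νm := Measure.pi fun _ : Fin m => Q with hνm
  set νn := Measure.pi fun _ : Fin n => Q with hνn
  set g : (Fin m → 𝒳) → ℝ :=
    fun y => (∏ ℓ, r (y ℓ)) * (A m).indicator (fun _ => (1 : ℝ)) y with hg
  have hgmeas : Measurable g :=
    (Finset.measurable_prod _ fun ℓ _ => hr.comp (measurable_pi_apply ℓ)).mul
      (measurable_const.indicator (hA m))
  have hg0 : ∀ y, 0 ≤ g y := fun y =>
    mul_nonneg (Finset.prod_nonneg fun ℓ _ => hr0 _)
      (Set.indicator_nonneg (fun _ _ => zero_le_one) _)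
  have hkey : ∫⁻ y, ENNReal.ofReal (g y) ∂νm = (Measure.pi fun _ : Fin m => P) (A m) := by
    have h1 : ∀ y, ENNReal.ofReal (g y)
        = (A m).indicator (fun y => ∏ ℓ, ρ (y ℓ)) y := by
      intro y
      by_cases hy : y ∈ A m
      · rw [Set.indicator_of_mem hy, hg]
        simp only [Set.indicator_of_mem hy, mul_one]
        exact ENNReal.ofReal_prod_of_nonneg fun ℓ _ => hr0 _
      · rw [Set.indicator_of_notMem hy, hg]
        simp only [Set.indicator_of_notMem hy, mul_zero, ENNReal.ofReal_zero]
    simp_rw [h1]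
    rw [lintegral_indicator (hA m), hPQ, aux_pi_withDensity Q ρ hρ,
      withDensity_apply _ (hA m)]
  have hgint : Integrable g νm := by
    refine ⟨hgmeas.aestronglyMeasurable, ?_⟩
    rw [hasFiniteIntegral_iff_ofReal (Eventually.of_forall hg0), hkey]
    exact measure_lt_top _ _
  have hterm : ∀ i : Fin m → Fin n, Function.Injective i →
      ∫ x, (∏ ℓ, r (x (i ℓ))) * (A m).indicator (fun _ => (1 : ℝ)) (fun ℓ => x (i ℓ)) ∂νn
        = ((Measure.pi fun _ : Fin m => P) (A m)).toReal := by
    intro i hi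
    have hmp := aux_measurePreserving_comp (n := n) (m := m) Q hi
    have h2 : ∫ x, g (fun ℓ => x (i ℓ)) ∂νn = ∫ y, g y ∂νm := by
      rw [hνm, hνn, ← hmp.map_eq, integral_map hmp.measurable.aemeasurable
        (by rw [hmp.map_eq]; exact hgmeas.aestronglyMeasurable)]
    have h3 : ∫ y, g y ∂νm = ((Measure.pi fun _ : Fin m => P) (A m)).toReal := by
      rw [integral_eq_lintegral_of_nonneg_ae (Eventually.of_forall hg0)
        hgmeas.aestronglyMeasurable, hkey]
    rw [← h3, ← h2]
  have hint : ∀ i ∈ Finset.univ.filter (fun i : Fin m → Fin n => Function.Injective i),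
      Integrable (fun x : Fin n → 𝒳 =>
        (∏ ℓ, r (x (i ℓ))) * (A m).indicator (fun _ => (1 : ℝ)) (fun ℓ => x (i ℓ))) νn := by
    intro i hi
    have hi' : Function.Injective i := (Finset.mem_filter.mp hi).2
    have hmp := aux_measurePreserving_comp (n := n) (m := m) Q hi'
    have := (integrable_map_measure
      (by rw [hmp.map_eq]; exact hgmeas.aestronglyMeasurable)
      hmp.measurable.aemeasurable).mp (by rw [hmp.map_eq]; exact hgint)
    simpa [Function.comp_def, hg] using this
  have hcard : (Finset.univ.filter (fun i : Fin m → Fin n => Function.Injective i)).card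
      = n.descFactorial m := by
    rw [← Fintype.card_subtype,
      Fintype.card_congr (Equiv.subtypeInjectiveEquivEmbedding (Fin m) (Fin n)),
      Fintype.card_embedding_eq, Fintype.card_fin, Fintype.card_fin]
  unfold cStat
  rw [integral_const_mul, integral_finset_sum _ hint,
    Finset.sum_congr rfl (fun i hi => hterm i (Finset.mem_filter.mp hi).2),
    Finset.sum_const, nsmul_eq_mul, hcard]
  set v := ((Measure.pi fun _ : Fin m => P) (A m)).toReal
  have hfac : ((n - m).factorial : ℝ) * (n.descFactorial m : ℝ) = (n.factorial : ℝ) := by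
    exact_mod_cast Nat.factorial_mul_descFactorial hmn
  have hne : (n.factorial : ℝ) ≠ 0 := Nat.cast_ne_zero.mpr n.factorial_ne_zero
  calc ((n - m).factorial : ℝ) / (n.factorial : ℝ) * ((n.descFactorial m : ℝ) * v)
      = ((n - m).factorial : ℝ) * (n.descFactorial m : ℝ) / (n.factorial : ℝ) * v := by ring
    _ = v := by rw [hfac, div_self hne, one_mul]
end

section
/- For all integers 1 ≤ m ≤ n, if E_Q[r̄(X₁)²] < ∞ then Var_Q(d(n,m)) = C(n,m)^{−1}·Σ_{ℓ=1}^{m} C(m,ℓ)·C(n−m, m−ℓ)·(E_Q[r̄(X₁)²]^ℓ − 1), where C(a,b) denotes the binomial coefficient, equal to 0 when b > a. -/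
open MeasureTheory ProbabilityTheory Filter Topology
open scoped ENNReal

/-- `dStat r n m x` is the normalizing statistic
`d(n,m) = ((n-m)!/n!) · Σ_{(j₁,…,j_m) distinct} ∏_ℓ r̄(x_{j_ℓ})`,
the sum ranging over all `m`-tuples of pairwise distinct indices in `{1,…,n}`. -/
noncomputable def dStat {𝒳 : Type*} (r : 𝒳 → ℝ) (n m : ℕ) (x : Fin n → 𝒳) : ℝ :=
  ((n - m).factorial : ℝ) / (n.factorial : ℝ) *
    ∑ i ∈ Finset.univ.filter (fun i : Fin m → Fin n => Function.Injective i),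
      ∏ ℓ, r (x (i ℓ))

section DRPLAux

variable {n m : ℕ}

/-- number of injective maps with image contained in / equal to a fixed `m`-set. -/
lemma drpl_card_fiber (T : Finset (Fin n)) (hT : T.card = m) :
    ((Finset.univ.filter (fun j : Fin m → Fin n => Function.Injective j)).filter
      (fun j => Finset.image j Finset.univ = T)).card = m.factorial := by
  classical
  rw [Finset.filter_filter]
  have h1 : (Finset.univ.filter fun j : Fin m → Fin n =>
        Function.Injective j ∧ Finset.image j Finset.univ = T)
      = Finset.univ.filter fun j => Function.Injective j ∧ ∀ ℓ, j ℓ ∈ T := by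
    ext j
    simp only [Finset.mem_filter, Finset.mem_univ, true_and]
    constructor
    · rintro ⟨hj, hIm⟩
      exact ⟨hj, fun ℓ => hIm ▸ Finset.mem_image_of_mem j (Finset.mem_univ ℓ)⟩
    · rintro ⟨hj, hmem⟩
      refine ⟨hj, Finset.eq_of_subset_of_card_le ?_ ?_⟩
      · exact Finset.image_subset_iff.2 fun ℓ _ => hmem ℓ
      · rw [Finset.card_image_of_injective _ hj, Finset.card_univ, Fintype.card_fin, hT]
  rw [h1, ← Fintype.card_subtype]
  have e : {j : Fin m → Fin n // Function.Injective j ∧ ∀ ℓ, j ℓ ∈ T}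
      ≃ (Fin m ↪ {x : Fin n // x ∈ T}) :=
    { toFun := fun j => ⟨fun ℓ => ⟨j.1 ℓ, j.2.2 ℓ⟩,
        fun a b h => j.2.1 (congrArg Subtype.val h)⟩
      invFun := fun f => ⟨fun ℓ => (f ℓ : Fin n),
        ⟨fun a b h => f.injective (Subtype.ext h), fun ℓ => (f ℓ).2⟩⟩
      left_inv := fun j => by ext ℓ; rfl
      right_inv := fun f => by ext ℓ; rfl }
  rw [Fintype.card_congr e, Fintype.card_embedding_eq, Fintype.card_coe, Fintype.card_fin, hT,
    Nat.descFactorial_self]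

lemma drpl_sum_injective (G : Finset (Fin n) → ℝ) :
    ∑ j ∈ Finset.univ.filter (fun j : Fin m → Fin n => Function.Injective j),
        G (Finset.image j Finset.univ)
      = (m.factorial : ℝ) *
          ∑ T ∈ Finset.powersetCard m (Finset.univ : Finset (Fin n)), G T := by
  classical
  rw [← Finset.sum_fiberwise_of_maps_to (g := fun j : Fin m → Fin n => Finset.image j Finset.univ)
    (t := Finset.powersetCard m Finset.univ) ?_ (fun j => G (Finset.image j Finset.univ))]
  · rw [Finset.mul_sum]
    refine Finset.sum_congr rfl fun T hT => ?_
    rw [Finset.mem_powersetCard] at hT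
    have : ∀ j ∈ (Finset.univ.filter fun j : Fin m → Fin n => Function.Injective j).filter
        (fun j => Finset.image j Finset.univ = T), G (Finset.image j Finset.univ) = G T := by
      intro j hj
      rw [(Finset.mem_filter.1 hj).2]
    rw [Finset.sum_congr rfl this, Finset.sum_const, drpl_card_fiber T hT.2, nsmul_eq_mul]
  · intro j hj
    rw [Finset.mem_filter] at hj
    rw [Finset.mem_powersetCard]
    exact ⟨Finset.subset_univ _, by
      rw [Finset.card_image_of_injective _ hj.2, Finset.card_univ, Fintype.card_fin]⟩

lemma drpl_card_slice (S : Finset (Fin n)) (hS : S.card = m) {ℓ : ℕ} (hℓ : ℓ ≤ m) :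
    ((Finset.powersetCard m (Finset.univ : Finset (Fin n))).filter
        (fun T => (T ∩ S).card = ℓ)).card
      = m.choose ℓ * (n - m).choose (m - ℓ) := by
  classical
  rw [Finset.card_bij' (fun T _ => (T ∩ S, T \ S))
      (fun A _ => A.1 ∪ A.2)
      (t := (S.powersetCard ℓ) ×ˢ (Sᶜ.powersetCard (m - ℓ))) ?_ ?_ ?_ ?_]
  · rw [Finset.card_product, Finset.card_powersetCard, Finset.card_powersetCard, hS,
      Finset.card_compl, Fintype.card_fin, hS]
  · intro T hT
    simp only [Finset.mem_filter, Finset.mem_powersetCard] at hT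
    obtain ⟨⟨-, hTm⟩, hTS⟩ := hT
    simp only [Finset.mem_product, Finset.mem_powersetCard]
    refine ⟨⟨Finset.inter_subset_right, hTS⟩, fun x hx => ?_, ?_⟩
    · simp only [Finset.mem_sdiff] at hx
      simpa using hx.2
    · have := Finset.card_inter_add_card_sdiff T S
      omega
  · intro A hA
    simp only [Finset.mem_product, Finset.mem_powersetCard] at hA
    obtain ⟨⟨hA1, hA1c⟩, hA2, hA2c⟩ := hA
    have hdisj : Disjoint A.1 A.2 := by
      refine Finset.disjoint_left.2 fun x hx1 hx2 => ?_
      have := hA2 hx2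
      simp only [Finset.mem_compl] at this
      exact this (hA1 hx1)
    simp only [Finset.mem_filter, Finset.mem_powersetCard]
    have hu : (A.1 ∪ A.2) ∩ S = A.1 := by
      ext x
      simp only [Finset.mem_inter, Finset.mem_union]
      constructor
      · rintro ⟨hx1 | hx2, hxS⟩
        · exact hx1
        · exact absurd hxS (by simpa using hA2 hx2)
      · intro hx
        exact ⟨Or.inl hx, hA1 hx⟩
    refine ⟨⟨Finset.subset_univ _, ?_⟩, by rw [hu, hA1c]⟩
    rw [Finset.card_union_of_disjoint hdisj, hA1c, hA2c]
    omega
  · intro T hT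
    simp only [Finset.mem_filter, Finset.mem_powersetCard] at hT
    ext x
    simp only [Finset.mem_union, Finset.mem_inter, Finset.mem_sdiff]
    tauto
  · intro A hA
    simp only [Finset.mem_product, Finset.mem_powersetCard] at hA
    obtain ⟨⟨hA1, hA1c⟩, hA2, hA2c⟩ := hA
    have h1 : ∀ x, x ∈ A.1 → x ∈ S := fun x hx => hA1 hx
    have h2 : ∀ x, x ∈ A.2 → x ∉ S := fun x hx => by simpa using hA2 hx
    ext x
    · simp only [Finset.mem_inter, Finset.mem_union]
      constructor
      · rintro ⟨hx1 | hx2, hxS⟩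
        · exact hx1
        · exact absurd hxS (h2 x hx2)
      · exact fun hx => ⟨Or.inl hx, h1 x hx⟩
    · simp only [Finset.mem_sdiff, Finset.mem_union]
      constructor
      · rintro ⟨hx1 | hx2, hxS⟩
        · exact absurd (h1 x hx1) hxS
        · exact hx2
      · exact fun hx => ⟨Or.inr hx, h2 x hx⟩

lemma drpl_sum_powersetCard (s : ℝ) (S : Finset (Fin n)) (hS : S.card = m) :
    ∑ T ∈ Finset.powersetCard m (Finset.univ : Finset (Fin n)), s ^ (T ∩ S).card
      = ∑ ℓ ∈ Finset.range (m + 1),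
          (m.choose ℓ : ℝ) * ((n - m).choose (m - ℓ) : ℝ) * s ^ ℓ := by
  classical
  rw [← Finset.sum_fiberwise_of_maps_to (g := fun T : Finset (Fin n) => (T ∩ S).card)
      (t := Finset.range (m + 1)) ?_ (fun T => s ^ (T ∩ S).card)]
  · refine Finset.sum_congr rfl fun ℓ hℓ => ?_
    rw [Finset.mem_range] at hℓ
    have : ∀ T ∈ (Finset.powersetCard m (Finset.univ : Finset (Fin n))).filter
        (fun T => (T ∩ S).card = ℓ), s ^ (T ∩ S).card = s ^ ℓ := by
      intro T hT; rw [(Finset.mem_filter.1 hT).2]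
    rw [Finset.sum_congr rfl this, Finset.sum_const,
      drpl_card_slice S hS (Nat.lt_succ_iff.1 hℓ), nsmul_eq_mul]
    push_cast
    ring
  · intro T hT
    rw [Finset.mem_powersetCard] at hT
    rw [Finset.mem_range, Nat.lt_succ_iff, ← hT.2]
    exact Finset.card_le_card Finset.inter_subset_left


variable {𝒳 : Type*} [MeasurableSpace 𝒳]

/-- Basic integral computations for the coordinatewise factors. -/
theorem drpl_pair_integral
    (Q : Measure 𝒳) [IsProbabilityMeasure Q]
    (r : 𝒳 → ℝ) (hr : Measurable r) (hr1 : ∫ x, r x ∂Q = 1)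
    (hr2 : Integrable (fun x => r x ^ 2) Q)
    (n : ℕ) (A B : Finset (Fin n)) :
    (Integrable (fun x : Fin n → 𝒳 =>
        (∏ k, (if k ∈ A then r (x k) else 1)) * ∏ k, (if k ∈ B then r (x k) else 1))
      (Measure.pi fun _ : Fin n => Q)) ∧
    ∫ x : Fin n → 𝒳,
        (∏ k, (if k ∈ A then r (x k) else 1)) * ∏ k, (if k ∈ B then r (x k) else 1)
        ∂(Measure.pi fun _ : Fin n => Q)
      = (∫ x, r x ^ 2 ∂Q) ^ (A ∩ B).card := by
  classical
  letI : MeasureSpace 𝒳 := { volume := Q }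
  have hri : Integrable r Q :=
    ((memLp_two_iff_integrable_sq hr.aestronglyMeasurable).2 hr2).integrable one_le_two
  have hpiv : Measure.pi (fun _ : Fin n => Q) = (volume : Measure (Fin n → 𝒳)) := rfl
  set g : Fin n → 𝒳 → ℝ := fun k y => (if k ∈ A then r y else 1) * (if k ∈ B then r y else 1)
    with hg
  have hgi : ∀ k, Integrable (g k) (volume : Measure 𝒳) := by
    intro k
    by_cases hA : k ∈ A <;> by_cases hB : k ∈ B <;>
      simp only [hg, hA, hB, if_true, if_false, mul_one, one_mul]
    · have h2 := hr2; simp only [pow_two] at h2; exact h2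
    · exact hri
    · exact hri
    · exact integrable_const 1
  have hgv : ∀ k, (∫ y, g k y ∂(volume : Measure 𝒳))
      = if k ∈ A ∩ B then (∫ x, r x ^ 2 ∂Q) else 1 := by
    intro k
    by_cases hA : k ∈ A <;> by_cases hB : k ∈ B
    · have hk : k ∈ A ∩ B := Finset.mem_inter.2 ⟨hA, hB⟩
      simp only [hg, hA, hB, if_true, if_pos hk]
      simp_rw [← pow_two]
      rfl
    · have hk : k ∉ A ∩ B := by simp [Finset.mem_inter, hB]
      simp only [hg, hA, hB, if_true, if_false, if_neg hk, mul_one]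
      exact hr1
    · have hk : k ∉ A ∩ B := by simp [Finset.mem_inter, hA]
      simp only [hg, hA, hB, if_true, if_false, if_neg hk, one_mul]
      exact hr1
    · have hk : k ∉ A ∩ B := by simp [Finset.mem_inter, hA]
      simp only [hg, hA, hB, if_false, if_neg hk, mul_one]
      simp
  have hprod : (fun x : Fin n → 𝒳 =>
      (∏ k, (if k ∈ A then r (x k) else 1)) * ∏ k, (if k ∈ B then r (x k) else 1))
      = fun x => ∏ k, g k (x k) := by
    funext x
    rw [← Finset.prod_mul_distrib]
  constructor
  · rw [hprod, hpiv]
    exact Integrable.fintype_prod (f := g) hgi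
  · rw [hprod, MeasureTheory.integral_fintype_prod_eq_prod (f := g)]
    have : ∀ k ∈ Finset.univ, (∫ y, g k y ∂Q)
        = if k ∈ A ∩ B then (∫ x, r x ^ 2 ∂Q) else 1 := fun k _ => hgv k
    rw [Finset.prod_congr rfl this, Finset.prod_ite_mem, Finset.univ_inter, Finset.prod_const]


end DRPLAux

/-- **Exact variance formula for the DRPL denominator.** For integers `1 ≤ m ≤ n`, if
`E_Q[r̄(X₁)²] < ∞` then
`Var_Q(d(n,m)) = C(n,m)⁻¹ · Σ_{ℓ=1}^m C(m,ℓ)·C(n−m, m−ℓ)·(E_Q[r̄(X₁)²]^ℓ − 1)`,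
where `C(a,b)` is the binomial coefficient (equal to `0` when `b > a`) and the variance is
taken under the i.i.d. law `Q^⊗n` of the data. -/
theorem drpl_denominator_variance_formula
    {𝒳 : Type*} [MeasurableSpace 𝒳]
    (μ : Measure 𝒳) [SigmaFinite μ]
    (q : 𝒳 → ℝ≥0∞) (hq : Measurable q)
    (Q : Measure 𝒳) [IsProbabilityMeasure Q] (hQ : Q = μ.withDensity q)
    (r : 𝒳 → ℝ) (hr : Measurable r) (hr0 : ∀ x, 0 ≤ r x)
    (hr1 : ∫ x, r x ∂Q = 1)
    (P : Measure 𝒳) [IsProbabilityMeasure P]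
    (hP : P = μ.withDensity fun x => ENNReal.ofReal (r x) * q x)
    (n m : ℕ) (hm1 : 1 ≤ m) (hmn : m ≤ n)
    (hr2 : Integrable (fun x => r x ^ 2) Q) :
    variance (dStat r n m) (Measure.pi fun _ : Fin n => Q)
      = (n.choose m : ℝ)⁻¹ *
          ∑ ℓ ∈ Finset.Icc 1 m,
            (m.choose ℓ : ℝ) * ((n - m).choose (m - ℓ) : ℝ) *
              ((∫ x, r x ^ 2 ∂Q) ^ ℓ - 1) := by
  classical
  set s : ℝ := ∫ x, r x ^ 2 ∂Q with hs
  set c : ℝ := ((n - m).factorial : ℝ) / (n.factorial : ℝ) with hc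
  set I : Finset (Fin m → Fin n) :=
    Finset.univ.filter (fun i : Fin m → Fin n => Function.Injective i) with hI
  -- rewriting tuple products via images
  have hFrw : ∀ i : Fin m → Fin n, Function.Injective i → ∀ x : Fin n → 𝒳,
      (∏ ℓ, r (x (i ℓ)))
        = ∏ k, (if k ∈ Finset.image i Finset.univ then r (x k) else 1) := by
    intro i hi x
    rw [Finset.prod_ite_mem, Finset.univ_inter,
      Finset.prod_image (fun a _ b _ h => hi h)]
  -- integrability and values of pair products
  have hFPint : ∀ i ∈ I, ∀ j ∈ I, Integrable
      (fun x : Fin n → 𝒳 => (∏ ℓ, r (x (i ℓ))) * ∏ ℓ, r (x (j ℓ)))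
      (Measure.pi fun _ : Fin n => Q) := by
    intro i hi j hj
    have hi2 := (Finset.mem_filter.1 hi).2
    have hj2 := (Finset.mem_filter.1 hj).2
    have heq : (fun x : Fin n → 𝒳 => (∏ ℓ, r (x (i ℓ))) * ∏ ℓ, r (x (j ℓ)))
        = fun x => (∏ k, (if k ∈ Finset.image i Finset.univ then r (x k) else 1)) *
            ∏ k, (if k ∈ Finset.image j Finset.univ then r (x k) else 1) := by
      funext x; rw [hFrw i hi2 x, hFrw j hj2 x]
    rw [heq]
    exact (drpl_pair_integral Q r hr hr1 hr2 n _ _).1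
  have hFPval : ∀ i ∈ I, ∀ j ∈ I,
      ∫ x : Fin n → 𝒳, (∏ ℓ, r (x (i ℓ))) * ∏ ℓ, r (x (j ℓ))
          ∂(Measure.pi fun _ : Fin n => Q)
        = s ^ ((Finset.image i Finset.univ) ∩ (Finset.image j Finset.univ)).card := by
    intro i hi j hj
    have hi2 := (Finset.mem_filter.1 hi).2
    have hj2 := (Finset.mem_filter.1 hj).2
    have heq : (fun x : Fin n → 𝒳 => (∏ ℓ, r (x (i ℓ))) * ∏ ℓ, r (x (j ℓ)))
        = fun x => (∏ k, (if k ∈ Finset.image i Finset.univ then r (x k) else 1)) *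
            ∏ k, (if k ∈ Finset.image j Finset.univ then r (x k) else 1) := by
      funext x; rw [hFrw i hi2 x, hFrw j hj2 x]
    rw [heq]
    exact (drpl_pair_integral Q r hr hr1 hr2 n _ _).2
  -- single products: integrability and value 1
  have hempty : ∀ x : Fin n → 𝒳,
      (∏ k, (if k ∈ (∅ : Finset (Fin n)) then r (x k) else 1)) = 1 := by
    intro x; simp
  have hsingle : ∀ i : Fin m → Fin n, Function.Injective i →
      (fun x : Fin n → 𝒳 => ∏ ℓ, r (x (i ℓ)))
        = fun x => (∏ k, (if k ∈ Finset.image i Finset.univ then r (x k) else 1)) *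
            ∏ k, (if k ∈ (∅ : Finset (Fin n)) then r (x k) else 1) := by
    intro i hi2
    funext x
    rw [hempty x, mul_one, hFrw i hi2 x]
  have hFI : ∀ i ∈ I, Integrable (fun x : Fin n → 𝒳 => ∏ ℓ, r (x (i ℓ)))
      (Measure.pi fun _ : Fin n => Q) := by
    intro i hi
    rw [hsingle i (Finset.mem_filter.1 hi).2]
    exact (drpl_pair_integral Q r hr hr1 hr2 n _ _).1
  have hFval : ∀ i ∈ I, ∫ x : Fin n → 𝒳, (∏ ℓ, r (x (i ℓ)))
      ∂(Measure.pi fun _ : Fin n => Q) = 1 := by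
    intro i hi
    rw [hsingle i (Finset.mem_filter.1 hi).2]
    rw [(drpl_pair_integral Q r hr hr1 hr2 n _ _).2]
    simp
  -- cardinality of the injective-tuple index set
  have hcard : I.card = n.descFactorial m := by
    rw [hI, ← Fintype.card_subtype,
      Fintype.card_congr (Equiv.subtypeInjectiveEquivEmbedding (Fin m) (Fin n)),
      Fintype.card_embedding_eq, Fintype.card_fin, Fintype.card_fin]
  -- mean of dStat
  have hmean : ∫ x : Fin n → 𝒳, dStat r n m x ∂(Measure.pi fun _ : Fin n => Q) = 1 := by
    have hdef : (fun x : Fin n → 𝒳 => dStat r n m x)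
        = fun x => c * ∑ i ∈ I, ∏ ℓ, r (x (i ℓ)) := rfl
    rw [hdef, MeasureTheory.integral_const_mul, MeasureTheory.integral_finset_sum I hFI,
      Finset.sum_congr rfl hFval, Finset.sum_const, nsmul_eq_mul, mul_one, hcard, hc]
    have h1 : ((n - m).factorial : ℝ) * (n.descFactorial m : ℝ) = (n.factorial : ℝ) := by
      exact_mod_cast Nat.factorial_mul_descFactorial hmn
    have hfne : (n.factorial : ℝ) ≠ 0 := Nat.cast_ne_zero.mpr (Nat.factorial_ne_zero n)
    field_simp
    linarith [h1]
  -- square of dStat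
  have hsqeq : (fun x : Fin n → 𝒳 => dStat r n m x ^ 2)
      = fun x => c ^ 2 * ∑ i ∈ I, ∑ j ∈ I,
          (∏ ℓ, r (x (i ℓ))) * ∏ ℓ, r (x (j ℓ)) := by
    funext x
    have hdef : dStat r n m x = c * ∑ i ∈ I, ∏ ℓ, r (x (i ℓ)) := rfl
    rw [hdef, mul_pow, sq (∑ i ∈ I, ∏ ℓ, r (x (i ℓ))), Finset.sum_mul_sum]
  have hsqint : Integrable (fun x : Fin n → 𝒳 => dStat r n m x ^ 2)
      (Measure.pi fun _ : Fin n => Q) := by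
    rw [hsqeq]
    exact (integrable_finset_sum I fun i hi =>
      integrable_finset_sum I fun j hj => hFPint i hi j hj).const_mul _
  have hmeas : AEStronglyMeasurable (dStat r n m) (Measure.pi fun _ : Fin n => Q) := by
    have : Measurable fun x : Fin n → 𝒳 => ∑ i ∈ I, ∏ ℓ, r (x (i ℓ)) :=
      Finset.measurable_sum _ fun i _ =>
        Finset.measurable_prod _ fun ℓ _ => hr.comp (measurable_pi_apply _)
    exact (this.const_mul c).aestronglyMeasurable
  have hmem : MemLp (dStat r n m) 2 (Measure.pi fun _ : Fin n => Q) :=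
    (memLp_two_iff_integrable_sq hmeas).2 hsqint
  -- value of the second moment
  have hsqval : ∫ x : Fin n → 𝒳, dStat r n m x ^ 2 ∂(Measure.pi fun _ : Fin n => Q)
      = c ^ 2 * ∑ i ∈ I, ∑ j ∈ I,
          s ^ ((Finset.image i Finset.univ) ∩ (Finset.image j Finset.univ)).card := by
    rw [hsqeq, MeasureTheory.integral_const_mul,
      MeasureTheory.integral_finset_sum I (fun i hi => integrable_finset_sum I
        (fun j hj => hFPint i hi j hj))]
    congr 1
    refine Finset.sum_congr rfl fun i hi => ?_
    rw [MeasureTheory.integral_finset_sum I (fun j hj => hFPint i hi j hj)]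
    exact Finset.sum_congr rfl fun j hj => hFPval i hi j hj
  -- combinatorial evaluation of the double sum
  set K : ℝ := ∑ ℓ ∈ Finset.range (m + 1),
      (m.choose ℓ : ℝ) * ((n - m).choose (m - ℓ) : ℝ) * s ^ ℓ with hK
  have hcomb : ∑ i ∈ I, ∑ j ∈ I,
      s ^ ((Finset.image i Finset.univ) ∩ (Finset.image j Finset.univ)).card
      = (n.descFactorial m : ℝ) * ((m.factorial : ℝ) * K) := by
    have hinner : ∀ i ∈ I,
        (∑ j ∈ I, s ^ ((Finset.image i Finset.univ) ∩ (Finset.image j Finset.univ)).card)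
          = (m.factorial : ℝ) * K := by
      intro i hi
      have hi2 := (Finset.mem_filter.1 hi).2
      rw [drpl_sum_injective (m := m)
        (fun B => s ^ ((Finset.image i Finset.univ) ∩ B).card)]
      congr 1
      have hcardim : (Finset.image i Finset.univ).card = m := by
        rw [Finset.card_image_of_injective _ hi2, Finset.card_univ, Fintype.card_fin]
      rw [hK, ← drpl_sum_powersetCard s (Finset.image i Finset.univ) hcardim]
      exact Finset.sum_congr rfl fun T _ => by rw [Finset.inter_comm]
    rw [Finset.sum_congr rfl hinner, Finset.sum_const, nsmul_eq_mul, hcard]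
  -- final algebra
  have hCne : (n.choose m : ℝ) ≠ 0 := Nat.cast_ne_zero.mpr (Nat.choose_pos hmn).ne'
  have hkey : c ^ 2 * ((n.descFactorial m : ℝ) * (m.factorial : ℝ)) = (n.choose m : ℝ)⁻¹ := by
    have h1 : ((n - m).factorial : ℝ) * (n.descFactorial m : ℝ) = (n.factorial : ℝ) := by
      exact_mod_cast Nat.factorial_mul_descFactorial hmn
    have h2 : (n.choose m : ℝ) * (m.factorial : ℝ) * ((n - m).factorial : ℝ)
        = (n.factorial : ℝ) := by
      exact_mod_cast Nat.choose_mul_factorial_mul_factorial hmn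
    have hfne : (n.factorial : ℝ) ≠ 0 := Nat.cast_ne_zero.mpr (Nat.factorial_ne_zero n)
    have hfmne : ((n - m).factorial : ℝ) ≠ 0 :=
      Nat.cast_ne_zero.mpr (Nat.factorial_ne_zero _)
    refine eq_inv_of_mul_eq_one_left ?_
    rw [hc]
    field_simp
    nlinarith [h1, h2]
  -- Vandermonde
  have hV : (∑ ℓ ∈ Finset.range (m + 1), m.choose ℓ * (n - m).choose (m - ℓ)) = n.choose m := by
    have h := Nat.add_choose_eq m (n - m) m
    rw [Nat.add_sub_cancel' hmn] at h
    rw [h, Finset.Nat.sum_antidiagonal_eq_sum_range_succ_mk]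
  have hVR : (∑ ℓ ∈ Finset.range (m + 1),
      (m.choose ℓ : ℝ) * ((n - m).choose (m - ℓ) : ℝ)) = (n.choose m : ℝ) := by
    exact_mod_cast hV
  -- range sum to Icc sum
  have hIcc : ∑ ℓ ∈ Finset.Icc 1 m,
      (m.choose ℓ : ℝ) * ((n - m).choose (m - ℓ) : ℝ) * (s ^ ℓ - 1)
      = ∑ ℓ ∈ Finset.range (m + 1),
          (m.choose ℓ : ℝ) * ((n - m).choose (m - ℓ) : ℝ) * (s ^ ℓ - 1) := by
    have hset2 : Finset.range (m + 1) = Finset.Icc 0 m := by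
      rw [Finset.range_eq_Ico, Finset.Ico_add_one_right_eq_Icc]
    have hset : Finset.Icc 1 m = (Finset.Icc 0 m).erase 0 := by
      rw [Finset.Icc_erase_left]
      exact Finset.Icc_add_one_left_eq_Ioc 0 m
    have h0mem : (0 : ℕ) ∈ Finset.Icc 0 m := by simp
    rw [hset2, ← Finset.add_sum_erase _ _ h0mem, ← hset]
    simp
  have hKC : ∑ ℓ ∈ Finset.range (m + 1),
      (m.choose ℓ : ℝ) * ((n - m).choose (m - ℓ) : ℝ) * (s ^ ℓ - 1)
      = K - (n.choose m : ℝ) := by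
    rw [hK, ← hVR, ← Finset.sum_sub_distrib]
    exact Finset.sum_congr rfl fun ℓ _ => by ring
  -- conclude
  rw [ProbabilityTheory.variance_eq_sub hmem]
  simp only [Pi.pow_apply]
  rw [hsqval, hcomb]
  have hmean' : (Measure.pi fun _ : Fin n => Q)[dStat r n m] = 1 := hmean
  rw [hmean', one_pow, hIcc, hKC]
  rw [mul_sub, inv_mul_cancel₀ hCne, ← hkey]
  ring
end

section
/- Define g(n,m) := n! / ((n−m)!·n^m) for integers 0 ≤ m ≤ n. Then for every q ∈ [0,1): lim_{n→∞} g(n, ⌊n^q⌋) = 0 if q ∈ (1/2, 1); lim_{n→∞} g(n, ⌊n^q⌋) = e^{−1/2} if q = 1/2; and lim_{n→∞} g(n, ⌊n^q⌋) = 1 if q ∈ [0, 1/2). -/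
open Filter Topology Finset

lemma log_one_sub_le {x : ℝ} (h1 : x < 1) : Real.log (1 - x) ≤ -x := by
  have := Real.log_le_sub_one_of_pos (by linarith : (0:ℝ) < 1 - x)
  linarith

lemma le_log_one_sub {x : ℝ} (h0 : 0 ≤ x) (h1 : x ≤ 1/2) :
    -(x + 2*x^2) ≤ Real.log (1 - x) := by
  have hx1 : (0:ℝ) < 1 - x := by linarith
  have hx2 : (0:ℝ) < 1 + x + 2*x^2 := by nlinarith
  have hprod : (1:ℝ) ≤ (1 - x) * (1 + x + 2*x^2) := by nlinarith
  have h3 : 0 ≤ Real.log ((1 - x) * (1 + x + 2*x^2)) := Real.log_nonneg hprod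
  rw [Real.log_mul (ne_of_gt hx1) (ne_of_gt hx2)] at h3
  have h4 : Real.log (1 + x + 2*x^2) ≤ x + 2*x^2 := by
    have := Real.log_le_sub_one_of_pos hx2
    linarith
  linarith

lemma sum_range_cast (m : ℕ) : (∑ i ∈ Finset.range m, (i:ℝ)) = m * ((m:ℝ) - 1) / 2 := by
  induction m with
  | zero => simp
  | succ k ih => rw [Finset.sum_range_succ, ih]; push_cast; ring

lemma g_eq_exp {n m : ℕ} (hm : m ≤ n) (hn : 0 < n) :
    (n.factorial : ℝ) / (((n - m).factorial : ℝ) * (n:ℝ)^m)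
      = Real.exp (∑ i ∈ Finset.range m, Real.log (1 - (i:ℝ)/n)) := by
  have hnR : (0:ℝ) < n := by exact_mod_cast hn
  have hfac : ∀ i ∈ Finset.range m, (0:ℝ) < 1 - (i:ℝ)/n := by
    intro i hi
    have hi' : i < n := lt_of_lt_of_le (Finset.mem_range.mp hi) hm
    have : (i:ℝ) < n := by exact_mod_cast hi'
    have : (i:ℝ)/n < 1 := by rw [div_lt_one hnR]; exact this
    linarith
  rw [Real.exp_sum, Finset.prod_congr rfl (fun i hi => Real.exp_log (hfac i hi))]
  have hcast : ((n.descFactorial m : ℕ) : ℝ) = ∏ i ∈ Finset.range m, ((n:ℝ) - i) := by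
    rw [Nat.descFactorial_eq_prod_range, Nat.cast_prod]
    refine Finset.prod_congr rfl fun i hi => ?_
    have : i ≤ n := le_of_lt (lt_of_lt_of_le (Finset.mem_range.mp hi) hm)
    rw [Nat.cast_sub this]
  have hfact : (n.factorial : ℝ) = ((n-m).factorial : ℝ) * ∏ i ∈ Finset.range m, ((n:ℝ) - i) := by
    rw [← hcast, ← Nat.cast_mul, Nat.factorial_mul_descFactorial hm]
  have hprod : ∏ i ∈ Finset.range m, (1 - (i:ℝ)/n)
      = (∏ i ∈ Finset.range m, ((n:ℝ) - i)) / (n:ℝ)^m := by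
    calc ∏ i ∈ Finset.range m, (1 - (i:ℝ)/n)
        = ∏ i ∈ Finset.range m, (((n:ℝ) - i)/n) := by
          refine Finset.prod_congr rfl fun i hi => ?_
          field_simp
      _ = (∏ i ∈ Finset.range m, ((n:ℝ) - i)) / (n:ℝ)^m := by
          rw [Finset.prod_div_distrib, Finset.prod_const, Finset.card_range]
  rw [hprod, hfact, mul_div_mul_left _ _ (by positivity : ((n-m).factorial : ℝ) ≠ 0)]

lemma rpow_helper {x : ℝ} (hx : 0 < x) (a : ℝ) (k j : ℕ) :
    x ^ ((k:ℝ) * a - (j:ℝ)) = (x ^ a) ^ k / x ^ j := by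
  rw [Real.rpow_sub hx, show (k:ℝ)*a = a*(k:ℝ) from mul_comm _ _,
    Real.rpow_mul hx.le, Real.rpow_natCast, Real.rpow_natCast]

lemma cast_mul_sub_one_nonneg (k : ℕ) : (0:ℝ) ≤ (k:ℝ) * ((k:ℝ) - 1) := by
  rcases Nat.eq_zero_or_pos k with h | h
  · simp [h]
  · have : (1:ℝ) ≤ k := by exact_mod_cast h
    nlinarith

lemma half_sub_helper {x r : ℝ} (hx : x ≠ 0) : 1/2 - (3/2)*(r/x) = (x - 3*r)/(2*x) := by
  field_simp

set_option maxHeartbeats 1000000 in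
/-- **Asymptotics of the probability of distinct uniform draws.** Define
`g(n,m) := n! / ((n−m)!·n^m)`. Then for every `q ∈ [0,1)`:
if `q ∈ (1/2, 1)` then `g(n, ⌊n^q⌋) → 0`; if `q = 1/2` then `g(n, ⌊n^q⌋) → e^{−1/2}`;
and if `q ∈ [0, 1/2)` then `g(n, ⌊n^q⌋) → 1`. -/
theorem distinct_draw_probability_asymptotics
    (q : ℝ) (hq0 : 0 ≤ q) (hq1 : q < 1) :
    ((1 / 2 : ℝ) < q →
      Tendsto (fun n : ℕ =>
          (n.factorial : ℝ) /
            (((n - ⌊(n : ℝ) ^ q⌋₊).factorial : ℝ) * (n : ℝ) ^ ⌊(n : ℝ) ^ q⌋₊))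
        atTop (𝓝 0)) ∧
    (q = 1 / 2 →
      Tendsto (fun n : ℕ =>
          (n.factorial : ℝ) /
            (((n - ⌊(n : ℝ) ^ q⌋₊).factorial : ℝ) * (n : ℝ) ^ ⌊(n : ℝ) ^ q⌋₊))
        atTop (𝓝 (Real.exp (-(1 / 2))))) ∧
    (q < 1 / 2 →
      Tendsto (fun n : ℕ =>
          (n.factorial : ℝ) /
            (((n - ⌊(n : ℝ) ^ q⌋₊).factorial : ℝ) * (n : ℝ) ^ ⌊(n : ℝ) ^ q⌋₊))
        atTop (𝓝 1)) := by
  set M : ℕ → ℕ := fun n => ⌊(n : ℝ) ^ q⌋₊ with hMdef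
  set S : ℕ → ℝ := fun n => ∑ i ∈ Finset.range (M n), Real.log (1 - (i:ℝ)/n) with hSdef
  set F : ℕ → ℝ := fun n => (M n : ℝ) * ((M n : ℝ) - 1) / 2 / (n:ℝ) with hFdef
  set C : ℕ → ℝ := fun n => 2 * (M n : ℝ)^3 / (n:ℝ)^2 with hCdef
  have hMle : ∀ n : ℕ, (M n : ℝ) ≤ (n:ℝ)^q :=
    fun n => Nat.floor_le (Real.rpow_nonneg (Nat.cast_nonneg n) q)
  have hrq : Tendsto (fun n : ℕ => (n:ℝ)^(q-1)) atTop (𝓝 0) := by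
    have := (tendsto_rpow_neg_atTop (by linarith : (0:ℝ) < 1 - q)).comp
      tendsto_natCast_atTop_atTop
    simpa [Function.comp_def, neg_sub] using this
  have ev_half : ∀ᶠ n : ℕ in atTop, (n:ℝ)^(q-1) ≤ 1/2 :=
    hrq.eventually (eventually_le_nhds (by norm_num : (0:ℝ) < 1/2))
  have ev_main : ∀ᶠ n : ℕ in atTop, 1 ≤ n ∧ 2*(M n : ℝ) ≤ (n:ℝ) := by
    filter_upwards [eventually_ge_atTop 1, ev_half] with n hn1 hn2
    refine ⟨hn1, ?_⟩
    have hn0 : (0:ℝ) < n := by exact_mod_cast hn1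
    have h1 : (n:ℝ)^q = n * (n:ℝ)^(q-1) := by
      rw [show q = 1 + (q-1) by ring, Real.rpow_add hn0, Real.rpow_one]
      ring_nf
    have h2 : (M n : ℝ) ≤ n * (n:ℝ)^(q-1) := h1 ▸ hMle n
    nlinarith [Real.rpow_nonneg hn0.le (q-1)]
  -- x-bounds for indices
  have hx_bounds : ∀ n : ℕ, 1 ≤ n → 2*(M n : ℝ) ≤ (n:ℝ) →
      ∀ i ∈ Finset.range (M n), 0 ≤ (i:ℝ)/n ∧ (i:ℝ)/n ≤ 1/2 := by
    intro n hn1 hn2 i hi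
    have hn0 : (0:ℝ) < n := by exact_mod_cast hn1
    have hiM : i < M n := Finset.mem_range.mp hi
    have hiR : (i:ℝ) + 1 ≤ (M n : ℝ) := by exact_mod_cast hiM
    constructor
    · positivity
    · rw [div_le_iff₀ hn0]; linarith
  -- g = exp ∘ S eventually
  have hgeq : (fun n : ℕ =>
        (n.factorial : ℝ) /
          (((n - M n).factorial : ℝ) * (n : ℝ) ^ M n))
      =ᶠ[atTop] fun n => Real.exp (S n) := by
    filter_upwards [ev_main] with n hn
    obtain ⟨hn1, hn2⟩ := hn
    have hMn : M n ≤ n := by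
      have : (M n : ℝ) ≤ n := by nlinarith [(Nat.cast_nonneg (M n) : (0:ℝ) ≤ M n)]
      exact_mod_cast this
    exact g_eq_exp hMn hn1
  -- upper bound for S
  have hup : ∀ᶠ n : ℕ in atTop, S n ≤ -F n := by
    filter_upwards [ev_main] with n ⟨hn1, hn2⟩
    have hn0 : (0:ℝ) < n := by exact_mod_cast hn1
    have h1 : S n ≤ ∑ i ∈ Finset.range (M n), (-((i:ℝ)/n)) := by
      refine Finset.sum_le_sum fun i hi => ?_
      obtain ⟨hx0, hx1⟩ := hx_bounds n hn1 hn2 i hi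
      exact log_one_sub_le (by linarith)
    have h2 : ∑ i ∈ Finset.range (M n), (-((i:ℝ)/n)) = -F n := by
      simp only [hFdef]
      rw [Finset.sum_neg_distrib, ← Finset.sum_div, sum_range_cast]
    linarith [h1, h2.ge]
  -- lower bound for S
  have hlow : ∀ᶠ n : ℕ in atTop, -(F n + C n) ≤ S n := by
    filter_upwards [ev_main] with n ⟨hn1, hn2⟩
    have hn0 : (0:ℝ) < n := by exact_mod_cast hn1
    have h1 : ∑ i ∈ Finset.range (M n), (-((i:ℝ)/n + 2*((i:ℝ)/n)^2)) ≤ S n := by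
      refine Finset.sum_le_sum fun i hi => ?_
      obtain ⟨hx0, hx1⟩ := hx_bounds n hn1 hn2 i hi
      exact le_log_one_sub hx0 hx1
    have hT : ∑ i ∈ Finset.range (M n), 2*((i:ℝ)/n)^2 ≤ C n := by
      have h3 : ∀ i ∈ Finset.range (M n), 2*((i:ℝ)/n)^2 ≤ 2*((M n:ℝ)/n)^2 := by
        intro i hi
        have hiR : (i:ℝ) ≤ (M n : ℝ) := by
          exact_mod_cast le_of_lt (Finset.mem_range.mp hi)
        gcongr
      calc ∑ i ∈ Finset.range (M n), 2*((i:ℝ)/n)^2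
          ≤ ∑ _i ∈ Finset.range (M n), 2*((M n:ℝ)/n)^2 := Finset.sum_le_sum h3
        _ = (M n : ℝ) * (2*((M n:ℝ)/n)^2) := by
            rw [Finset.sum_const, Finset.card_range, nsmul_eq_mul]
        _ = C n := by rw [hCdef]; field_simp
    have h4 : ∑ i ∈ Finset.range (M n), (-((i:ℝ)/n + 2*((i:ℝ)/n)^2))
        = -(F n + ∑ i ∈ Finset.range (M n), 2*((i:ℝ)/n)^2) := by
      simp only [hFdef]
      rw [Finset.sum_neg_distrib, Finset.sum_add_distrib, ← Finset.sum_div, sum_range_cast]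
    rw [h4] at h1
    linarith
  -- C → 0 when q ≤ 1/2
  have hCt : q ≤ 1/2 → Tendsto C atTop (𝓝 0) := by
    intro hq
    have hD : Tendsto (fun n : ℕ => 2*(n:ℝ)^(3*q-2)) atTop (𝓝 0) := by
      have := ((tendsto_rpow_neg_atTop (by linarith : (0:ℝ) < 2-3*q)).comp
        tendsto_natCast_atTop_atTop).const_mul 2
      simpa [Function.comp, show -(2-3*q) = 3*q-2 by ring] using this
    refine tendsto_of_tendsto_of_tendsto_of_le_of_le' tendsto_const_nhds hD ?_ ?_
    · filter_upwards with n
      simp only [hCdef]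
      positivity
    · filter_upwards [eventually_ge_atTop 1] with n hn1
      have hn0 : (0:ℝ) < n := by exact_mod_cast hn1
      have hkey : (n:ℝ)^(3*q-2) = ((n:ℝ)^q)^3/(n:ℝ)^2 := by
        have h := rpow_helper hn0 q 3 2
        norm_num at h
        exact h
      simp only [hCdef]
      rw [hkey]
      have hM3 : ((M n:ℝ))^3 ≤ ((n:ℝ)^q)^3 :=
        pow_le_pow_left₀ (Nat.cast_nonneg _) (hMle n) 3
      rw [mul_div_assoc]
      gcongr
  -- master step for finite limits
  have master : ∀ L : ℝ, Tendsto F atTop (𝓝 L) → q ≤ 1/2 →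
      Tendsto (fun n : ℕ =>
          (n.factorial : ℝ) / (((n - M n).factorial : ℝ) * (n:ℝ) ^ M n))
        atTop (𝓝 (Real.exp (-L))) := by
    intro L hFt hq
    have hC0 := hCt hq
    have hS : Tendsto S atTop (𝓝 (-L)) := by
      have hlo : Tendsto (fun n => -(F n + C n)) atTop (𝓝 (-(L + 0))) := (hFt.add hC0).neg
      rw [add_zero] at hlo
      exact tendsto_of_tendsto_of_tendsto_of_le_of_le' hlo hFt.neg hlow hup
    exact Tendsto.congr' hgeq.symm ((Real.continuous_exp.tendsto _).comp hS)
  refine ⟨?_, ?_, ?_⟩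
  · -- q > 1/2 : limit 0
    intro hq
    have hFtop : Tendsto F atTop atTop := by
      have hpow : Tendsto (fun n : ℕ => (n:ℝ)^q) atTop atTop :=
        (tendsto_rpow_atTop (by linarith : (0:ℝ) < q)).comp tendsto_natCast_atTop_atTop
      have ev4 : ∀ᶠ n : ℕ in atTop, 4 ≤ (n:ℝ)^q := hpow.eventually_ge_atTop 4
      have hbase : Tendsto (fun n : ℕ => (n:ℝ)^(2*q-1)) atTop atTop :=
        (tendsto_rpow_atTop (by linarith : (0:ℝ) < 2*q-1)).comp tendsto_natCast_atTop_atTop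
      have hD : Tendsto (fun n : ℕ => (n:ℝ)^(2*q-1)/8) atTop atTop :=
        hbase.atTop_div_const (by norm_num : (0:ℝ) < 8)
      refine tendsto_atTop_mono' atTop ?_ hD
      filter_upwards [eventually_ge_atTop 1, ev4] with n hn1 h4
      have hn0 : (0:ℝ) < n := by exact_mod_cast hn1
      have hkey : (n:ℝ)^(2*q-1) = ((n:ℝ)^q)^2/(n:ℝ) := by
        have h := rpow_helper hn0 q 2 1
        norm_num at h
        exact h
      have hMl : (n:ℝ)^q - 1 ≤ (M n : ℝ) := by
        have := Nat.lt_floor_add_one ((n:ℝ)^q)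
        push_cast at this
        linarith
      simp only [hFdef]
      rw [hkey, div_div, div_div]
      rw [div_le_div_iff₀ (by positivity) (by positivity)]
      have hM0 : (0:ℝ) ≤ (M n : ℝ) := Nat.cast_nonneg _
      have hprod : ((n:ℝ)^q/2) * ((n:ℝ)^q/2) ≤ (M n : ℝ) * ((M n : ℝ) - 1) := by
        apply mul_le_mul (by linarith) (by linarith) (by linarith) hM0
      nlinarith [hprod, hn0, sq_nonneg ((n:ℝ)^q)]
    have hSbot : Tendsto S atTop atBot :=
      tendsto_atBot_mono' atTop hup (tendsto_neg_atTop_atBot.comp hFtop)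
    exact Tendsto.congr' hgeq.symm (Real.tendsto_exp_atBot.comp hSbot)
  · -- q = 1/2 : limit exp(-(1/2))
    intro hq
    subst hq
    have hFhalf : Tendsto F atTop (𝓝 (1/2)) := by
      have hl : Tendsto (fun n : ℕ => 1/2 - (3/2)*(n:ℝ)^(-(1/2:ℝ))) atTop (𝓝 (1/2)) := by
        have h1 := ((tendsto_rpow_neg_atTop (by norm_num : (0:ℝ) < 1/2)).comp
          tendsto_natCast_atTop_atTop).const_mul (3/2 : ℝ)
        have h2 := (tendsto_const_nhds (x := (1/2 : ℝ)) (f := atTop)).sub h1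
        simpa [Function.comp] using h2
      refine tendsto_of_tendsto_of_tendsto_of_le_of_le' hl tendsto_const_nhds ?_ ?_
      · filter_upwards [eventually_ge_atTop 1] with n hn1
        have hn0 : (0:ℝ) < n := by exact_mod_cast hn1
        have hr2 : ((n:ℝ)^((1:ℝ)/2))^2 = (n:ℝ) := by
          rw [← Real.rpow_natCast ((n:ℝ)^((1:ℝ)/2)) 2, ← Real.rpow_mul (Nat.cast_nonneg n)]
          norm_num
        have hr0 : (0:ℝ) ≤ (n:ℝ)^((1:ℝ)/2) := Real.rpow_nonneg (Nat.cast_nonneg n) _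
        have hn1R : (1:ℝ) ≤ (n:ℝ) := by exact_mod_cast hn1
        have hr1 : (1:ℝ) ≤ (n:ℝ)^((1:ℝ)/2) := by nlinarith [hn0, hn1R, hr2, hr0]
        have hMu : (M n : ℝ) ≤ (n:ℝ)^((1:ℝ)/2) := hMle n
        have hMl : (n:ℝ)^((1:ℝ)/2) - 1 ≤ (M n : ℝ) := by
          have := Nat.lt_floor_add_one ((n:ℝ)^((1:ℝ)/2))
          push_cast at this
          linarith
        have hM0 : (0:ℝ) ≤ (M n : ℝ) := Nat.cast_nonneg _
        have hkeylow : (n:ℝ) - 3*((n:ℝ)^((1:ℝ)/2)) ≤ (M n : ℝ) * ((M n : ℝ) - 1) := by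
          nlinarith [hr2, hMu, hMl, hr1, hM0,
            mul_nonneg (by linarith : (0:ℝ) ≤ (M n : ℝ) - ((n:ℝ)^((1:ℝ)/2) - 1))
              (by linarith : (0:ℝ) ≤ (M n : ℝ) + ((n:ℝ)^((1:ℝ)/2) - 1))]
        have hninv : (n:ℝ)^(-(1/2:ℝ)) = (n:ℝ)^((1:ℝ)/2)/(n:ℝ) := by
          rw [show -(1/2 : ℝ) = 1/2 - 1 by norm_num, Real.rpow_sub hn0, Real.rpow_one]
        have heq : 1/2 - (3/2)*((n:ℝ)^((1:ℝ)/2)/(n:ℝ))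
            = ((n:ℝ) - 3*((n:ℝ)^((1:ℝ)/2)))/(2*(n:ℝ)) :=
          half_sub_helper (ne_of_gt hn0)
        simp only [hFdef]
        rw [hninv, heq, div_div]
        gcongr
      · filter_upwards [eventually_ge_atTop 1] with n hn1
        have hn0 : (0:ℝ) < n := by exact_mod_cast hn1
        have hr2 : ((n:ℝ)^((1:ℝ)/2))^2 = (n:ℝ) := by
          rw [← Real.rpow_natCast ((n:ℝ)^((1:ℝ)/2)) 2, ← Real.rpow_mul (Nat.cast_nonneg n)]
          norm_num
        have hr0 : (0:ℝ) ≤ (n:ℝ)^((1:ℝ)/2) := Real.rpow_nonneg (Nat.cast_nonneg n) _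
        have hMu : (M n : ℝ) ≤ (n:ℝ)^((1:ℝ)/2) := hMle n
        have hM0 : (0:ℝ) ≤ (M n : ℝ) := Nat.cast_nonneg _
        have hkeyup : (M n : ℝ) * ((M n : ℝ) - 1) ≤ (n:ℝ) := by
          nlinarith [hr2, hMu, hM0, mul_nonneg (by linarith : (0:ℝ) ≤ (n:ℝ)^((1:ℝ)/2) - (M n : ℝ))
            (by linarith : (0:ℝ) ≤ (n:ℝ)^((1:ℝ)/2) + (M n : ℝ))]
        simp only [hFdef]
        rw [div_div, div_le_iff₀ (by positivity : (0:ℝ) < 2*(n:ℝ))]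
        linarith
    exact master (1/2) hFhalf (le_refl _)
  · -- q < 1/2 : limit 1
    intro hq
    have hF0 : Tendsto F atTop (𝓝 0) := by
      have hD : Tendsto (fun n : ℕ => ((n:ℝ)^(2*q-1))/2) atTop (𝓝 0) := by
        have := ((tendsto_rpow_neg_atTop (by linarith : (0:ℝ) < 1-2*q)).comp
          tendsto_natCast_atTop_atTop).div_const 2
        simpa [Function.comp, show -(1-2*q) = 2*q-1 by ring] using this
      refine tendsto_of_tendsto_of_tendsto_of_le_of_le' tendsto_const_nhds hD ?_ ?_
      · filter_upwards with n
        simp only [hFdef]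
        exact div_nonneg (div_nonneg (cast_mul_sub_one_nonneg _) (by norm_num))
          (Nat.cast_nonneg n)
      · filter_upwards [eventually_ge_atTop 1] with n hn1
        have hn0 : (0:ℝ) < n := by exact_mod_cast hn1
        have hkey : (n:ℝ)^(2*q-1) = ((n:ℝ)^q)^2/(n:ℝ) := by
          have h := rpow_helper hn0 q 2 1
          norm_num at h
          exact h
        have hM0 : (0:ℝ) ≤ (M n : ℝ) := Nat.cast_nonneg _
        have hMn := hMle n
        have hnum : (M n : ℝ) * ((M n : ℝ) - 1) ≤ ((n:ℝ)^q)^2 := by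
          nlinarith [Real.rpow_nonneg (Nat.cast_nonneg n) q]
        simp only [hFdef]
        rw [hkey, div_div, div_div]
        rw [div_le_div_iff₀ (by positivity) (by positivity)]
        nlinarith [hnum, hn0]
    have := master 0 hF0 (le_of_lt hq)
    rw [neg_zero, Real.exp_zero] at this
    exact this
end

section
/- Let σ_X, σ_ε, σ > 0. Let X and ε be independent real Gaussian random variables with X ~ N(0, σ_X²) and ε ~ N(0, σ_ε²), and set Y := X + ε. For x, y ∈ ℝ define r(x,y) := φ_{0,σ}(y) / φ_{x,σ_ε}(y), where φ_{μ,s}(t) := (2πs²)^{−1/2}·exp(−(t−μ)²/(2s²)) denotes the Gaussian density with mean μ and standard deviation s. Then E[r(X,Y)²] < ∞ if and only if σ² < 2(σ_ε² − σ_X²). -/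
open MeasureTheory
open scoped ENNReal

/-- `gpdf m s t = (2πs²)^{−1/2}·exp(−(t−m)²/(2s²))`, the density at `t` of a Gaussian with
mean `m` and standard deviation `s`. -/
noncomputable def gpdf (m s t : ℝ) : ℝ :=
  (Real.sqrt (2 * Real.pi * s ^ 2))⁻¹ * Real.exp (-((t - m) ^ 2) / (2 * s ^ 2))

lemma gpdf_pos (m s t : ℝ) (hs : 0 < s) : 0 < gpdf m s t := by
  unfold gpdf
  have h : 0 < 2 * Real.pi * s ^ 2 := by positivity
  positivity

lemma aux_mul (l1 l2 l3 eA eB eCx eD : ℝ) (h1 : l1 ≠ 0) (h2 : l2 ≠ 0) (h3 : l3 ≠ 0)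
    (hB : eB ≠ 0) :
    (l1⁻¹ * eA / (l3⁻¹ * eB)) ^ 2 * (l2⁻¹ * eCx * (l3⁻¹ * eD))
      = l1⁻¹ ^ 2 * l2⁻¹ * l3 * (eA * eA / (eB * eB) * (eCx * eD)) := by
  field_simp

lemma gpdf_continuous (m s : ℝ) : Continuous (gpdf m s) := by
  unfold gpdf
  exact continuous_const.mul (Real.continuous_exp.comp
    (((((continuous_id.sub continuous_const).pow 2)).neg).div_const _))

/-- Key analytic lemma: a sheared 2D Gaussian is integrable iff the second coefficient is
positive. -/
lemma gauss2d_integrable_iff (a κ δ : ℝ) (ha : 0 < a) :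
    Integrable
        (fun p : ℝ × ℝ => Real.exp (-(a * (p.1 + κ * p.2) ^ 2)) * Real.exp (-(δ * p.2 ^ 2)))
        volume
      ↔ 0 < δ := by
  have hcont : Continuous
      (fun p : ℝ × ℝ => Real.exp (-(a * (p.1 + κ * p.2) ^ 2)) * Real.exp (-(δ * p.2 ^ 2))) := by
    apply Continuous.mul
    · exact Real.continuous_exp.comp
        ((continuous_const.mul ((continuous_fst.add (continuous_const.mul continuous_snd)).pow 2)).neg)
    · exact Real.continuous_exp.comp
        ((continuous_const.mul (continuous_snd.pow 2)).neg)
  rw [show (volume : Measure (ℝ × ℝ)) = (volume : Measure ℝ).prod volume from rfl]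
  have hmeas : AEStronglyMeasurable
      (fun p : ℝ × ℝ => Real.exp (-(a * (p.1 + κ * p.2) ^ 2)) * Real.exp (-(δ * p.2 ^ 2)))
      ((volume : Measure ℝ).prod volume) := hcont.aestronglyMeasurable
  constructor
  · intro hInt
    by_contra hδ
    push_neg at hδ
    set g : ℝ × ℝ → ℝ := fun p => Real.exp (-(a * (p.1 + κ * p.2) ^ 2)) with hg
    have hgmeas : AEStronglyMeasurable g ((volume : Measure ℝ).prod volume) := by
      apply Continuous.aestronglyMeasurable
      exact Real.continuous_exp.comp
        ((continuous_const.mul ((continuous_fst.add (continuous_const.mul continuous_snd)).pow 2)).neg)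
    have hgInt : Integrable g ((volume : Measure ℝ).prod volume) := by
      refine hInt.mono hgmeas (Filter.Eventually.of_forall fun p => ?_)
      have h1 : (1 : ℝ) ≤ Real.exp (-(δ * p.2 ^ 2)) := by
        rw [← Real.exp_zero]
        apply Real.exp_le_exp.mpr
        nlinarith [sq_nonneg p.2]
      have h2 : 0 < Real.exp (-(a * (p.1 + κ * p.2) ^ 2)) := Real.exp_pos _
      simp only [g, Real.norm_eq_abs, abs_of_pos h2,
        abs_of_pos (mul_pos h2 (Real.exp_pos _))]
      nlinarith
    have h2 := ((integrable_prod_iff' hgmeas).mp hgInt).2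
    have hval : ∀ y : ℝ, (∫ x : ℝ, ‖g (x, y)‖) = Real.sqrt (Real.pi / a) := by
      intro y
      have h1 : (∫ x : ℝ, ‖g (x, y)‖) = ∫ x : ℝ, Real.exp (-a * (x + κ * y) ^ 2) := by
        congr 1
        funext x
        simp [g, Real.norm_eq_abs, abs_of_pos (Real.exp_pos _), neg_mul]
      rw [h1, integral_add_right_eq_self (fun x => Real.exp (-a * x ^ 2)) (κ * y),
        integral_gaussian]
    rw [funext hval] at h2
    rw [integrable_const_iff] at h2
    rcases h2 with h | h
    · have : (0:ℝ) < Real.sqrt (Real.pi / a) := Real.sqrt_pos.mpr (by positivity)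
      linarith
    · exact absurd h.measure_univ_lt_top (by simp [Real.volume_univ])
  · intro hδ
    rw [integrable_prod_iff' hmeas]
    constructor
    · refine Filter.Eventually.of_forall fun y => ?_
      have h1 : Integrable (fun x : ℝ => Real.exp (-a * x ^ 2)) volume :=
        integrable_exp_neg_mul_sq ha
      have h2 : Integrable (fun x : ℝ => Real.exp (-a * (x + κ * y) ^ 2)) volume :=
        h1.comp_add_right (κ * y)
      have h3 := h2.mul_const (Real.exp (-(δ * y ^ 2)))
      convert h3 using 2 with x
      rw [neg_mul]
    · have hval : ∀ y : ℝ,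
          (∫ x : ℝ, ‖Real.exp (-(a * (x + κ * y) ^ 2)) * Real.exp (-(δ * y ^ 2))‖)
            = Real.sqrt (Real.pi / a) * Real.exp (-δ * y ^ 2) := by
        intro y
        have h1 : (∫ x : ℝ, ‖Real.exp (-(a * (x + κ * y) ^ 2)) * Real.exp (-(δ * y ^ 2))‖)
            = ∫ x : ℝ, Real.exp (-a * (x + κ * y) ^ 2) * Real.exp (-(δ * y ^ 2)) := by
          congr 1
          funext x
          rw [Real.norm_eq_abs, abs_of_pos (mul_pos (Real.exp_pos _) (Real.exp_pos _)),
            neg_mul]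
        rw [h1, integral_mul_const,
          integral_add_right_eq_self (fun x => Real.exp (-a * x ^ 2)) (κ * y),
          integral_gaussian, neg_mul]
      simp only [hval]
      exact (integrable_exp_neg_mul_sq hδ).const_mul _

/-- **Finite second moment of the Gaussian weights.** Let `X ~ N(0, σ_X²)` and
`ε ~ N(0, σ_ε²)` be independent (their joint law is the measure on `ℝ²` with density
`gpdf 0 σX x · gpdf 0 σε e` with respect to Lebesgue measure), and set `Y := X + ε`.
With `r(x,y) := gpdf 0 σ y / gpdf x σε y` the ratio of the target marginal density of `Y`
and the observational conditional density of `Y` given `X = x`, one has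
`E[r(X,Y)²] < ∞` if and only if `σ² < 2(σ_ε² − σ_X²)`. -/
theorem gaussian_weight_second_moment_iff
    (σX σε σ : ℝ) (hσX : 0 < σX) (hσε : 0 < σε) (hσ : 0 < σ) :
    Integrable
        (fun p : ℝ × ℝ => (gpdf 0 σ (p.1 + p.2) / gpdf p.1 σε (p.1 + p.2)) ^ 2)
        (volume.withDensity fun p : ℝ × ℝ =>
          ENNReal.ofReal (gpdf 0 σX p.1 * gpdf 0 σε p.2))
      ↔ σ ^ 2 < 2 * (σε ^ 2 - σX ^ 2) := by
  have hπ := Real.pi_pos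
  set a : ℝ := (σ ^ 2 + 2 * σX ^ 2) / (2 * σ ^ 2 * σX ^ 2) with ha_def
  set κ : ℝ := (2 * σX ^ 2) / (σ ^ 2 + 2 * σX ^ 2) with hκ_def
  set δ : ℝ := (2 * (σε ^ 2 - σX ^ 2) - σ ^ 2) / (2 * σε ^ 2 * (σ ^ 2 + 2 * σX ^ 2))
    with hδ_def
  have ha : 0 < a := by positivity
  set C : ℝ := ((Real.sqrt (2 * Real.pi * σ ^ 2))⁻¹) ^ 2
      * (Real.sqrt (2 * Real.pi * σX ^ 2))⁻¹ * Real.sqrt (2 * Real.pi * σε ^ 2) with hC_def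
  have hs1 : (0:ℝ) < Real.sqrt (2 * Real.pi * σ ^ 2) := Real.sqrt_pos.mpr (by positivity)
  have hs2 : (0:ℝ) < Real.sqrt (2 * Real.pi * σX ^ 2) := Real.sqrt_pos.mpr (by positivity)
  have hs3 : (0:ℝ) < Real.sqrt (2 * Real.pi * σε ^ 2) := Real.sqrt_pos.mpr (by positivity)
  have hC : 0 < C := by positivity
  -- pointwise identity
  have hpt : ∀ p : ℝ × ℝ,
      (gpdf 0 σ (p.1 + p.2) / gpdf p.1 σε (p.1 + p.2)) ^ 2
          * (gpdf 0 σX p.1 * gpdf 0 σε p.2)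
        = C * (Real.exp (-(a * (p.1 + κ * p.2) ^ 2)) * Real.exp (-(δ * p.2 ^ 2))) := by
    rintro ⟨x, e⟩
    have h1 : σ ^ 2 ≠ 0 := by positivity
    have h2 : σX ^ 2 ≠ 0 := by positivity
    have h3 : σε ^ 2 ≠ 0 := by positivity
    have h4 : σ ^ 2 + 2 * σX ^ 2 ≠ 0 := by positivity
    have hexp : -(a * (x + κ * e) ^ 2) + -(δ * e ^ 2)
        = -((x + e - 0) ^ 2) / (2 * σ ^ 2) + -((x + e - 0) ^ 2) / (2 * σ ^ 2)
          - (-((x + e - x) ^ 2) / (2 * σε ^ 2) + -((x + e - x) ^ 2) / (2 * σε ^ 2))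
          + (-((x - 0) ^ 2) / (2 * σX ^ 2) + -((e - 0) ^ 2) / (2 * σε ^ 2)) := by
      rw [ha_def, hκ_def, hδ_def]
      field_simp
      ring
    calc (gpdf 0 σ (x + e) / gpdf x σε (x + e)) ^ 2 * (gpdf 0 σX x * gpdf 0 σε e)
        = C * Real.exp (-(a * (x + κ * e) ^ 2) + -(δ * e ^ 2)) := by
          rw [hexp]
          simp only [gpdf]
          rw [Real.exp_add, Real.exp_sub, Real.exp_add, Real.exp_add, Real.exp_add, hC_def]
          exact aux_mul _ _ _ _ _ _ _ hs1.ne' hs2.ne' hs3.ne' (Real.exp_pos _).ne'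
      _ = C * (Real.exp (-(a * (x + κ * e) ^ 2)) * Real.exp (-(δ * e ^ 2))) := by
          rw [Real.exp_add]
  -- the density is measurable and a.e. finite
  have hdmeas : Measurable fun p : ℝ × ℝ =>
      ENNReal.ofReal (gpdf 0 σX p.1 * gpdf 0 σε p.2) := by
    apply ENNReal.measurable_ofReal.comp
    exact (((gpdf_continuous 0 σX).comp continuous_fst).mul
      ((gpdf_continuous 0 σε).comp continuous_snd)).measurable
  have hdfin : ∀ᵐ p : ℝ × ℝ ∂(volume),
      ENNReal.ofReal (gpdf 0 σX p.1 * gpdf 0 σε p.2) < ∞ :=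
    Filter.Eventually.of_forall fun p => ENNReal.ofReal_lt_top
  rw [integrable_withDensity_iff hdmeas hdfin]
  have hfeq : (fun p : ℝ × ℝ =>
        (gpdf 0 σ (p.1 + p.2) / gpdf p.1 σε (p.1 + p.2)) ^ 2
          * (ENNReal.ofReal (gpdf 0 σX p.1 * gpdf 0 σε p.2)).toReal)
      = fun p : ℝ × ℝ =>
        C * (Real.exp (-(a * (p.1 + κ * p.2) ^ 2)) * Real.exp (-(δ * p.2 ^ 2))) := by
    funext p
    rw [ENNReal.toReal_ofReal (by
      have := gpdf_pos 0 σX p.1 hσX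
      have := gpdf_pos 0 σε p.2 hσε
      positivity)]
    exact hpt p
  rw [hfeq]
  rw [integrable_const_mul_iff (isUnit_iff_ne_zero.mpr hC.ne')]
  rw [gauss2d_integrable_iff a κ δ ha]
  rw [hδ_def]
  constructor
  · intro h
    have hden : (0:ℝ) < 2 * σε ^ 2 * (σ ^ 2 + 2 * σX ^ 2) := by positivity
    rcases div_pos_iff.mp h with ⟨h1, _⟩ | ⟨_, h2⟩
    · linarith
    · linarith
  · intro h
    apply div_pos (by linarith) (by positivity)
end
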